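/- arXiv:1505.02086 — 4 statements merged into one kernel-verified Lean document; each statement's English description precedes it below -/
import Mathlib

section
/- Fix c > 0 and 0 < p_0 < p_1 < 1. For each n and each p ∈ [p_0, p_1], let A_n be the adjacency matrix of a random graph following G(n, p/n) and K_n = D_n^{-1} A_n with D_n the diagonal matrix with diagonal c·1_n + A_n·1_n. Then inf over p ∈ [p_0, p_1] of P_p{ sr(K_n) ≤ 1/√(1+c) } tends to 1 as n → ∞, where P_p denotes probability under G(n, p/n). -/
open MeasureTheory Filter

noncomputable section

/-- The Bernoulli measure on `Bool` putting mass `a` on `true`. -/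
def bernoulliMeasure (a : ℝ) : Measure Bool :=
  (ENNReal.ofReal a) • Measure.dirac true + (ENNReal.ofReal (1 - a)) • Measure.dirac false

instance (a : ℝ) : IsFiniteMeasure (bernoulliMeasure a) := by
  constructor
  simp only [bernoulliMeasure, Measure.coe_add, Measure.coe_smul, Pi.add_apply, Pi.smul_apply,
    smul_eq_mul, measure_univ, mul_one]
  exact ENNReal.add_lt_top.2 ⟨ENNReal.ofReal_lt_top, ENNReal.ofReal_lt_top⟩

/-- The sample space for an Erdős–Rényi random graph on `Fin n`: one Boolean
(edge indicator) for every unordered pair `i < j`. -/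
abbrev EdgeSpace (n : ℕ) : Type := {e : Fin n × Fin n // e.1 < e.2} → Bool

/-- The Erdős–Rényi model `G(n, a)`: the edge indicators are i.i.d. Bernoulli(a). -/
def erMeasure (n : ℕ) (a : ℝ) : Measure (EdgeSpace n) :=
  Measure.pi fun _ => bernoulliMeasure a

/-- The (random, symmetric, zero-diagonal, 0-1) adjacency matrix of the graph. -/
def adjMatrix {n : ℕ} (ω : EdgeSpace n) : Matrix (Fin n) (Fin n) ℝ :=
  Matrix.of fun i j =>
    if h : i < j then (if ω ⟨(i, j), h⟩ then 1 else 0)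
    else if h' : j < i then (if ω ⟨(j, i), h'⟩ then 1 else 0) else 0

/-- `K = D⁻¹ A`, the row-normalization of `A` by `D = diag(c·1 + A·1)`. -/
def Kmat {n : ℕ} (c : ℝ) (A : Matrix (Fin n) (Fin n) ℝ) : Matrix (Fin n) (Fin n) ℝ :=
  Matrix.of fun i j => A i j / (c + ∑ l, A i l)

/-- `M = D⁻¹ (cJ + A)`, the row-normalization of `cJ + A`. -/
def Mmat {n : ℕ} (c : ℝ) (A : Matrix (Fin n) (Fin n) ℝ) : Matrix (Fin n) (Fin n) ℝ :=
  Matrix.of fun i j => (c / n + A i j) / (c + ∑ l, A i l)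

/-- The spectral radius of a real matrix: the largest modulus of a (complex) eigenvalue. -/
def sr {n : ℕ} (A : Matrix (Fin n) (Fin n) ℝ) : ℝ :=
  sSup ((fun z : ℂ => ‖z‖) '' spectrum ℂ (A.map Complex.ofReal))

end

/-!
Write `D = diag(c + A·1)`, so that `K = D⁻¹A`. Suppose every edge of the graph can be assigned one
of its endpoints, distinct edges getting distinct endpoints. For a vector `u`, AM–GM on each edge,
`2√(1+c) u_x u_y ≤ (1+c) u_x² + u_y²` with `x` the assigned endpoint, sums to
`√(1+c) uᵀAu ≤ uᵀDu`; and for an eigenpair `(μ, z)` of `K` the vector `u = |z|` satisfies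
`|μ| uᵀDu ≤ uᵀAu`. Hence `sr(K) ≤ 1/√(1+c)`.

By Hall's theorem such an assignment exists unless some set of edges spans fewer vertices than
it has edges, and a longest-path argument shows that such an edge set contains a path
`v₀ … v_m` with a chord at each end: `m + 1` vertices carrying `m + 2` edges. In `G(n, p/n)` the
expected number of these is at most `∑ₘ n^(m+1) (m+1)² (p/n)^(m+2) = O(1/n)`, uniformly in
`p ≤ p₁ < 1`.
-/

open Finset
open scoped ENNReal

section SpectralRadius

open Matrix

lemma Matrix.exists_mulVec_eq_smul_of_mem_spectrum {ι K : Type*} [Fintype ι] [DecidableEq ι]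
    [Field K] {M : Matrix ι ι K} {μ : K} (hμ : μ ∈ spectrum K M) : ∃ z ≠ 0, M *ᵥ z = μ • z := by
  rw [← spectrum_toLin', ← Module.End.hasEigenvalue_iff_mem_spectrum] at hμ
  obtain ⟨z, hz⟩ := hμ.exists_hasEigenvector
  exact ⟨z, hz.2, by rw [← toLin'_apply]; exact hz.apply_eq_smul⟩

variable {n : ℕ} {c : ℝ} {A : Matrix (Fin n) (Fin n) ℝ}

lemma mul_norm_mul_norm_le_of_Kmat_mulVec_eq_smul (hA : ∀ i j, 0 ≤ A i j)
    (hD : ∀ i, 0 < c + ∑ l, A i l) {μ : ℂ} {z : Fin n → ℂ}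
    (hz : (Kmat c A).map Complex.ofReal *ᵥ z = μ • z) (i : Fin n) :
    (c + ∑ l, A i l) * ‖μ‖ * ‖z i‖ ≤ ∑ j, A i j * ‖z j‖ := by
  have hrow : ((c + ∑ l, A i l : ℝ) : ℂ) * (μ * z i) = ∑ j, (A i j : ℂ) * z j := by
    rw [← smul_eq_mul μ, ← Pi.smul_apply, ← hz, mulVec, dotProduct, mul_sum]
    refine sum_congr rfl fun j _ => ?_
    simp only [map_apply, Kmat, of_apply, Complex.ofReal_div]
    rw [div_mul_eq_mul_div, mul_div_cancel₀ _ (Complex.ofReal_ne_zero.2 (hD i).ne')]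
  calc (c + ∑ l, A i l) * ‖μ‖ * ‖z i‖ = ‖∑ j, (A i j : ℂ) * z j‖ := by
        rw [← hrow, norm_mul, norm_mul, Complex.norm_of_nonneg (hD i).le, mul_assoc]
    _ ≤ ∑ j, A i j * ‖z j‖ := by
        refine (norm_sum_le _ _).trans_eq (sum_congr rfl fun j _ => ?_)
        rw [norm_mul, Complex.norm_of_nonneg (hA i j)]

theorem sr_Kmat_le_of_sum_mul_mul_le {r : ℝ} (hA : ∀ i j, 0 ≤ A i j) (hc : 0 < c) (hr : 0 ≤ r)
    (hQ : ∀ u : Fin n → ℝ, 0 ≤ u →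
      ∑ i, ∑ j, A i j * u i * u j ≤ r * ∑ i, (c + ∑ l, A i l) * u i ^ 2) :
    sr (Kmat c A) ≤ r := by
  refine Real.sSup_le ?_ hr
  rintro _ ⟨μ, hμ, rfl⟩
  obtain ⟨z, hz0, hz⟩ := exists_mulVec_eq_smul_of_mem_spectrum hμ
  set u : Fin n → ℝ := fun i => ‖z i‖
  have hD (i : Fin n) : 0 < c + ∑ l, A i l :=
    add_pos_of_pos_of_nonneg hc (sum_nonneg fun l _ => hA i l)
  have hpos : 0 < ∑ i, (c + ∑ l, A i l) * u i ^ 2 := by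
    obtain ⟨i, hi⟩ := Function.ne_iff.1 hz0
    exact sum_pos' (fun i _ => mul_nonneg (hD i).le (sq_nonneg _))
      ⟨i, mem_univ _, mul_pos (hD i) (pow_pos (norm_pos_iff.2 hi) 2)⟩
  refine le_of_mul_le_mul_right ?_ hpos
  calc ‖μ‖ * ∑ i, (c + ∑ l, A i l) * u i ^ 2
      = ∑ i, (c + ∑ l, A i l) * ‖μ‖ * u i * u i := by
        rw [mul_sum]; exact sum_congr rfl fun i _ => by ring
    _ ≤ ∑ i, (∑ j, A i j * u j) * u i := sum_le_sum fun i _ =>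
        mul_le_mul_of_nonneg_right
          (mul_norm_mul_norm_le_of_Kmat_mulVec_eq_smul hA hD hz i) (norm_nonneg _)
    _ = ∑ i, ∑ j, A i j * u i * u j := by
        simp_rw [sum_mul]
        exact sum_congr rfl fun i _ => sum_congr rfl fun j _ => by ring
    _ ≤ r * ∑ i, (c + ∑ l, A i l) * u i ^ 2 := hQ u fun i => norm_nonneg _

end SpectralRadius

section Orientation

variable {V : Type*} [Fintype V] [DecidableEq V] {F : Finset (Sym2 V)}

lemma sum_sum_ite_mk_mem {M : Type*} [AddCommMonoid M] (hF : ∀ e ∈ F, ¬e.IsDiag)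
    (φ : V → V → M) :
    ∑ i, ∑ j, (if s(i, j) ∈ F then φ i j else 0) =
      ∑ e ∈ F, Sym2.lift ⟨fun x y => φ x y + φ y x, fun _ _ => add_comm _ _⟩ e := by
  rw [← Fintype.sum_prod_type' (f := fun i j => if s(i, j) ∈ F then φ i j else 0),
    ← sum_filter, ← sum_fiberwise_of_maps_to (g := fun p : V × V => s(p.1, p.2)) (t := F)
      fun p hp => (mem_filter.1 hp).2]
  refine sum_congr rfl fun e he => ?_
  induction e using Sym2.ind with | _ x y => ?_
  have hxy : x ≠ y := fun h => hF _ he (Sym2.mk_isDiag_iff.2 h)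
  have hfiber : {p ∈ univ.filter (fun p : V × V => s(p.1, p.2) ∈ F) | s(p.1, p.2) = s(x, y)} =
      {(x, y), (y, x)} := by
    ext ⟨i, j⟩
    simp only [mem_filter, mem_univ, true_and, mem_insert, mem_singleton, Prod.mk.injEq,
      Sym2.eq_iff]
    constructor
    · exact fun h => h.2
    · rintro (⟨rfl, rfl⟩ | ⟨rfl, rfl⟩)
      · exact ⟨he, Or.inl ⟨rfl, rfl⟩⟩
      · exact ⟨Sym2.eq_swap ▸ he, Or.inr ⟨rfl, rfl⟩⟩
  rw [hfiber, sum_pair (by simp [hxy]), Sym2.lift_mk]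

theorem sqrt_one_add_mul_sum_sum_le {c : ℝ} (hc : 0 ≤ c) (hF : ∀ e ∈ F, ¬e.IsDiag)
    {A : Matrix V V ℝ} (hA : ∀ i j, A i j = if s(i, j) ∈ F then 1 else 0)
    {g : Sym2 V → V} (hgF : ∀ e ∈ F, g e ∈ e) (hg : Set.InjOn g F) (u : V → ℝ) :
    √(1 + c) * ∑ i, ∑ j, A i j * u i * u j ≤ ∑ i, (c + ∑ l, A i l) * u i ^ 2 := by
  set Q := Sym2.lift ⟨fun x y => u x * u y + u y * u x, fun _ _ => add_comm _ _⟩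
  set R := Sym2.lift ⟨fun x y => u x ^ 2 + u y ^ 2, fun _ _ => add_comm _ _⟩
  have hquad : ∑ i, ∑ j, A i j * u i * u j = ∑ e ∈ F, Q e := by
    rw [← sum_sum_ite_mk_mem hF]
    simp only [hA, ite_mul, one_mul, zero_mul]
  have hdeg : ∑ i, (c + ∑ l, A i l) * u i ^ 2 = ∑ e ∈ F, R e + c * ∑ i, u i ^ 2 := by
    rw [← sum_sum_ite_mk_mem hF, mul_sum, ← sum_add_distrib]
    simp only [hA, add_mul, sum_mul, ite_mul, one_mul, zero_mul, add_comm]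
  have hedge : ∀ e ∈ F, √(1 + c) * Q e ≤ R e + c * u (g e) ^ 2 := by
    intro e he
    induction e using Sym2.ind with | _ x y => ?_
    have hs : √(1 + c) ^ 2 = 1 + c := Real.sq_sqrt (by linarith)
    simp only [Q, R, Sym2.lift_mk]
    rcases Sym2.mem_iff.1 (hgF _ he) with h | h <;> rw [h] <;>
      nlinarith [sq_nonneg (√(1 + c) * u x - u y), sq_nonneg (√(1 + c) * u y - u x)]
  have hinj : ∑ e ∈ F, u (g e) ^ 2 ≤ ∑ i, u i ^ 2 := by
    rw [← sum_image (f := fun i => u i ^ 2) hg]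
    exact sum_le_univ_sum_of_nonneg fun i => sq_nonneg _
  calc √(1 + c) * ∑ i, ∑ j, A i j * u i * u j = ∑ e ∈ F, √(1 + c) * Q e := by
        rw [hquad, mul_sum]
    _ ≤ ∑ e ∈ F, (R e + c * u (g e) ^ 2) := sum_le_sum hedge
    _ = ∑ e ∈ F, R e + c * ∑ e ∈ F, u (g e) ^ 2 := by rw [sum_add_distrib, mul_sum]
    _ ≤ ∑ e ∈ F, R e + c * ∑ i, u i ^ 2 := by gcongr
    _ = ∑ i, (c + ∑ l, A i l) * u i ^ 2 := hdeg.symm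

end Orientation

section ChordedPath

variable {V : Type*} {F F' : Finset (Sym2 V)} {m a b : ℕ} {v : ℕ → V}

def IsPathIn (F : Finset (Sym2 V)) (m : ℕ) (v : ℕ → V) : Prop :=
  Set.InjOn v (Set.Iic m) ∧ ∀ i < m, s(v i, v (i + 1)) ∈ F

lemma IsPathIn.reverse (h : IsPathIn F m v) : IsPathIn F m fun i => v (m - i) := by
  refine ⟨fun i hi j hj hij => ?_, fun i hi => ?_⟩
  · simp only [Set.mem_Iic] at hi hj
    have := h.1 (Nat.sub_le m i) (Nat.sub_le m j) hij
    omega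
  · have := h.2 (m - (i + 1)) (by omega)
    rwa [show m - (i + 1) + 1 = m - i by omega, Sym2.eq_swap] at this

lemma IsPathIn.cons (h : IsPathIn F m v) {w : V} (hw : ∀ i ≤ m, w ≠ v i)
    (hwv : s(w, v 0) ∈ F) : IsPathIn F (m + 1) fun i => if i = 0 then w else v (i - 1) := by
  refine ⟨fun i hi j hj hij => ?_, fun i hi => ?_⟩
  · simp only [Set.mem_Iic] at hi hj
    rcases Nat.eq_zero_or_pos i with rfl | hi0 <;> rcases Nat.eq_zero_or_pos j with rfl | hj0
    · rfl
    · simp only [if_pos, if_neg hj0.ne'] at hij; exact absurd hij (hw _ (by omega))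
    · simp only [if_pos, if_neg hi0.ne'] at hij; exact absurd hij.symm (hw _ (by omega))
    · simp only [if_neg hi0.ne', if_neg hj0.ne'] at hij
      have := h.1 (show i - 1 ≤ m by omega) (show j - 1 ≤ m by omega) hij
      omega
  · rcases i with _ | i
    · simpa using hwv
    · simpa using h.2 i (by omega)

-- The rotation `i ↦ (i + k) % (m + 1)`, written without `%` so that `omega` can handle it.
lemma IsPathIn.rotate (h : IsPathIn F m v) (hclose : s(v m, v 0) ∈ F) {k : ℕ} (hk : k ≤ m) :
    IsPathIn F m fun i => v (if i + k ≤ m then i + k else i + k - (m + 1)) := by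
  refine ⟨fun i hi j hj hij => ?_, fun i hi => ?_⟩
  · simp only [Set.mem_Iic] at hi hj
    have := h.1 (by simp only [Set.mem_Iic]; split_ifs <;> omega)
      (by simp only [Set.mem_Iic]; split_ifs <;> omega) hij
    split_ifs at this <;> omega
  · dsimp only
    by_cases h1 : i + k + 1 ≤ m
    · have := h.2 (i + k) (by omega)
      rwa [if_pos (by omega), if_pos (by omega), show i + 1 + k = i + k + 1 by omega]
    by_cases h2 : i + k = m
    · rwa [if_pos (by omega), if_neg (by omega), h2, show i + 1 + k - (m + 1) = 0 by omega]
    · have := h.2 (i + k - (m + 1)) (by omega)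
      rwa [if_neg (by omega), if_neg (by omega), show i + 1 + k - (m + 1) = i + k - (m + 1) + 1
        by omega]

lemma IsPathIn.lt_card [Fintype V] (h : IsPathIn F m v) : m < Fintype.card V := by
  have := Fintype.card_le_of_injective (fun i : Fin (m + 1) => v i) fun i j hij =>
    Fin.ext (h.1 (Nat.lt_succ_iff.1 i.2) (Nat.lt_succ_iff.1 j.2) hij)
  simpa using this

def IsLongestPathIn (F : Finset (Sym2 V)) (m : ℕ) (v : ℕ → V) : Prop :=
  IsPathIn F m v ∧ ∀ m' v', IsPathIn F m' v' → m' ≤ m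

lemma exists_isLongestPathIn [Fintype V] {x y : V} (hxy : x ≠ y) (he : s(x, y) ∈ F) :
    ∃ m v, 1 ≤ m ∧ IsLongestPathIn F m v := by
  classical
  have h0 : IsPathIn F 0 fun _ => y :=
    ⟨fun i hi j hj _ => (Nat.le_zero.1 hi).trans (Nat.le_zero.1 hj).symm,
      fun i hi => absurd hi i.not_lt_zero⟩
  have h1 := h0.cons (w := x) (fun i _ => hxy) he
  let P : ℕ → Prop := fun m => ∃ v, IsPathIn F m v
  have hle : ∀ m, P m → m ≤ Fintype.card V := fun m ⟨v, hv⟩ => hv.lt_card.le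
  obtain ⟨v, hv⟩ := Nat.findGreatest_spec (P := P) (hle 1 ⟨_, h1⟩) ⟨_, h1⟩
  exact ⟨_, v, Nat.le_findGreatest (hle 1 ⟨_, h1⟩) ⟨_, h1⟩, hv,
    fun m' v' hv' => Nat.le_findGreatest (hle _ ⟨v', hv'⟩) ⟨v', hv'⟩⟩

lemma IsLongestPathIn.reverse (h : IsLongestPathIn F m v) :
    IsLongestPathIn F m fun i => v (m - i) :=
  ⟨h.1.reverse, h.2⟩

lemma IsLongestPathIn.rotate (h : IsLongestPathIn F m v) (hclose : s(v m, v 0) ∈ F) {k : ℕ}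
    (hk : k ≤ m) : IsLongestPathIn F m fun i => v (if i + k ≤ m then i + k else i + k - (m + 1)) :=
  ⟨h.1.rotate hclose hk, h.2⟩

lemma IsLongestPathIn.exists_eq_of_mk_mem_head (h : IsLongestPathIn F m v) {w : V}
    (hw : s(w, v 0) ∈ F) : ∃ i ≤ m, w = v i := by
  by_contra! hne
  have := h.2 _ _ (h.1.cons hne hw)
  omega

lemma IsLongestPathIn.exists_eq_of_mk_mem_last (h : IsLongestPathIn F m v) {w : V}
    (hw : s(w, v m) ∈ F) : ∃ i ≤ m, w = v i := by
  obtain ⟨i, hi, rfl⟩ := h.reverse.exists_eq_of_mk_mem_head (by simpa using hw)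
  exact ⟨m - i, Nat.sub_le m i, rfl⟩

lemma IsLongestPathIn.exists_eq_of_mk_mem_of_cycle (h : IsLongestPathIn F m v)
    (hclose : s(v m, v 0) ∈ F) {i : ℕ} (hi : i ≤ m) {w : V} (hw : s(w, v i) ∈ F) :
    ∃ j ≤ m, w = v j := by
  rcases hi.lt_or_eq with hi | rfl
  · obtain ⟨j, hj, rfl⟩ := (h.rotate hclose (k := i + 1) hi).exists_eq_of_mk_mem_last
      (by rwa [if_neg (by omega), show m + (i + 1) - (m + 1) = i by omega])
    exact ⟨_, by split_ifs <;> omega, rfl⟩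
  · exact h.exists_eq_of_mk_mem_last hw

lemma IsLongestPathIn.exists_head_chord (h : IsLongestPathIn F m v) (hm : 1 ≤ m)
    (hF : ∀ e ∈ F, ¬e.IsDiag) (hdeg : ∀ e ∈ F, ∀ x ∈ e, ∃ e' ∈ F, x ∈ e' ∧ e' ≠ e) :
    ∃ a, 2 ≤ a ∧ a ≤ m ∧ s(v 0, v a) ∈ F := by
  obtain ⟨e, he, hv0, hne⟩ := hdeg _ (h.1.2 0 hm) (v 0) (Sym2.mem_mk_left _ _)
  obtain ⟨a, ha, hwa⟩ := h.exists_eq_of_mk_mem_head (w := Sym2.Mem.other hv0)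
    (by rwa [Sym2.eq_swap, Sym2.other_spec])
  have hea : e = s(v 0, v a) := by rw [← hwa, Sym2.other_spec]
  refine ⟨a, ?_, ha, hea ▸ he⟩
  have h0 : a ≠ 0 := by rintro rfl; exact hF _ he (hea ▸ Sym2.mk_isDiag_iff.2 rfl)
  have h1 : a ≠ 1 := by rintro rfl; exact hne hea
  omega

lemma IsLongestPathIn.exists_last_chord (h : IsLongestPathIn F m v) (hm : 1 ≤ m)
    (hF : ∀ e ∈ F, ¬e.IsDiag) (hdeg : ∀ e ∈ F, ∀ x ∈ e, ∃ e' ∈ F, x ∈ e' ∧ e' ≠ e) :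
    ∃ b, b + 2 ≤ m ∧ s(v m, v b) ∈ F := by
  obtain ⟨a, ha, ham, hva⟩ := h.reverse.exists_head_chord hm hF hdeg
  exact ⟨m - a, by omega, by simpa using hva⟩

-- The conditions under which the path `v 0, …, v m` and the chords `s(v 0, v a)`, `s(v m, v b)`
-- are `m + 2` distinct edges on `m + 1` vertices.
def IsChordedPath (m : ℕ) (v : ℕ → V) (a b : ℕ) : Prop :=
  Set.InjOn v (Set.Iic m) ∧ 2 ≤ a ∧ a ≤ m ∧ b + 2 ≤ m ∧ ¬(a = m ∧ b = 0)

lemma IsChordedPath.congr {v' : ℕ → V} (h : IsChordedPath m v a b)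
    (hvv : Set.EqOn v v' (Set.Iic m)) : IsChordedPath m v' a b :=
  ⟨h.1.congr hvv, h.2⟩

variable [DecidableEq V]

def pathEdges (m : ℕ) (v : ℕ → V) : Finset (Sym2 V) :=
  (range m).image fun i => s(v i, v (i + 1))

lemma IsPathIn.pathEdges_subset (h : IsPathIn F m v) : pathEdges m v ⊆ F := by
  simpa [pathEdges, image_subset_iff] using h.2

def chordedPathEdges (m : ℕ) (v : ℕ → V) (a b : ℕ) : Finset (Sym2 V) :=
  insert s(v 0, v a) (insert s(v m, v b) (pathEdges m v))

def HasChordedPath (F : Finset (Sym2 V)) : Prop :=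
  ∃ m v a b, IsChordedPath m v a b ∧ chordedPathEdges m v a b ⊆ F

lemma HasChordedPath.mono (h : HasChordedPath F) (hFF' : F ⊆ F') : HasChordedPath F' :=
  let ⟨m, v, a, b, hv, hF⟩ := h
  ⟨m, v, a, b, hv, hF.trans hFF'⟩

lemma IsPathIn.hasChordedPath (h : IsPathIn F m v) (ha : 2 ≤ a) (ham : a ≤ m)
    (hb : b + 2 ≤ m) (hab : ¬(a = m ∧ b = 0)) (hva : s(v 0, v a) ∈ F) (hvb : s(v m, v b) ∈ F) :
    HasChordedPath F :=
  ⟨m, v, a, b, ⟨h.1, ha, ham, hb, hab⟩,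
    insert_subset hva (insert_subset hvb h.pathEdges_subset)⟩

lemma IsPathIn.hasChordedPath_of_cycle_chord (h : IsPathIn F m v) (hclose : s(v m, v 0) ∈ F)
    {i j : ℕ} (hij : i < j) (hj : j ≤ m) (hchord : s(v i, v j) ∈ F)
    (hrim : s(v i, v j) ∉ insert s(v m, v 0) (pathEdges m v)) : HasChordedPath F := by
  have hj1 : j ≠ i + 1 := by
    rintro rfl
    exact hrim (mem_insert_of_mem (mem_image.2 ⟨i, mem_range.2 (by omega), rfl⟩))
  have hij' : ¬(i = 0 ∧ j = m) := by
    rintro ⟨rfl, rfl⟩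
    exact hrim (mem_insert.2 (Or.inl Sym2.eq_swap))
  -- Rotating the cycle to start at `v (i + 1)` turns the cycle edge and the chord at `v i`
  -- into chords at both ends.
  have hrot := h.rotate hclose (k := i + 1) (by omega)
  refine hrot.hasChordedPath (a := m) (b := j - (i + 1)) (by omega) le_rfl (by omega) (by omega)
    ?_ ?_
  · rw [if_pos (by omega), if_neg (by omega), show m + (i + 1) - (m + 1) = i by omega, zero_add,
      Sym2.eq_swap]
    exact h.2 i (by omega)
  · rwa [if_neg (by omega), if_pos (by omega), show m + (i + 1) - (m + 1) = i by omega,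
      show j - (i + 1) + (i + 1) = j by omega]

lemma IsLongestPathIn.hasChordedPath_of_not_mem_cycle (h : IsLongestPathIn F m v)
    (hclose : s(v m, v 0) ∈ F) (hF : ∀ e ∈ F, ¬e.IsDiag) {e : Sym2 V} (he : e ∈ F) {i : ℕ}
    (hi : i ≤ m) (hvi : v i ∈ e) (hrim : e ∉ insert s(v m, v 0) (pathEdges m v)) :
    HasChordedPath F := by
  obtain ⟨j, hj, hwj⟩ := h.exists_eq_of_mk_mem_of_cycle hclose hi (w := Sym2.Mem.other hvi)
    (by rwa [Sym2.eq_swap, Sym2.other_spec])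
  have hij : e = s(v i, v j) := by rw [← hwj, Sym2.other_spec]
  subst hij
  rcases lt_trichotomy i j with hlt | rfl | hgt
  · exact h.1.hasChordedPath_of_cycle_chord hclose hlt hj he hrim
  · exact absurd (Sym2.mk_isDiag_iff.2 rfl) (hF _ he)
  · rw [Sym2.eq_swap (a := v i)] at he hrim
    exact h.1.hasChordedPath_of_cycle_chord hclose hgt hi he hrim

lemma card_biUnion_toFinset_erase_lt {e : Sym2 V} (he : e ∈ F) {x : V} (hx : x ∈ e)
    (hleaf : ∀ e' ∈ F, x ∈ e' → e' = e) (hcard : #(F.biUnion Sym2.toFinset) < #F) :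
    #((F.erase e).biUnion Sym2.toFinset) < #(F.erase e) := by
  have hsub : (F.erase e).biUnion Sym2.toFinset ⊆ (F.biUnion Sym2.toFinset).erase x := by
    intro y hy
    obtain ⟨e', he', hye'⟩ := mem_biUnion.1 hy
    refine mem_erase.2 ⟨?_, mem_biUnion.2 ⟨e', mem_of_mem_erase he', hye'⟩⟩
    rintro rfl
    exact ne_of_mem_erase he' (hleaf e' (mem_of_mem_erase he') (Sym2.mem_toFinset.1 hye'))
  have hx : x ∈ F.biUnion Sym2.toFinset := mem_biUnion.2 ⟨e, he, Sym2.mem_toFinset.2 hx⟩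
  have hle := card_le_card hsub
  rw [card_erase_of_mem hx] at hle
  rw [card_erase_of_mem he]
  have := card_pos.2 ⟨x, hx⟩
  omega

lemma IsPathIn.card_biUnion_toFinset_filter_lt (h : IsPathIn F m v) (hclose : s(v m, v 0) ∈ F)
    (hrim : ∀ e ∈ F, (∃ i ≤ m, v i ∈ e) → e ∈ insert s(v m, v 0) (pathEdges m v))
    (hcard : #(F.biUnion Sym2.toFinset) < #F) :
    #((F.filter fun e => ∀ i ≤ m, v i ∉ e).biUnion Sym2.toFinset) <
      #(F.filter fun e => ∀ i ≤ m, v i ∉ e) := by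
  set F' := F.filter fun e => ∀ i ≤ m, v i ∉ e
  set C := (range (m + 1)).image v
  have hC : #C = m + 1 := by
    rw [card_image_of_injOn fun i hi j hj hij => h.1 (Nat.lt_succ_iff.1 (mem_range.1 hi))
      (Nat.lt_succ_iff.1 (mem_range.1 hj)) hij, card_range]
  have hCV : C ⊆ F.biUnion Sym2.toFinset := by
    simp only [C, image_subset_iff, mem_range, mem_biUnion, Sym2.mem_toFinset]
    intro i hi
    rcases (Nat.lt_succ_iff.1 hi).lt_or_eq with hi | rfl
    · exact ⟨_, h.2 i hi, Sym2.mem_mk_left _ _⟩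
    · exact ⟨_, hclose, Sym2.mem_mk_left _ _⟩
  have hV' : F'.biUnion Sym2.toFinset ⊆ F.biUnion Sym2.toFinset \ C := by
    intro x hx
    obtain ⟨e, he, hxe⟩ := mem_biUnion.1 hx
    obtain ⟨heF, hoff⟩ := mem_filter.1 he
    refine mem_sdiff.2 ⟨mem_biUnion.2 ⟨e, heF, hxe⟩, fun hxC => ?_⟩
    obtain ⟨i, hi, rfl⟩ := mem_image.1 hxC
    exact hoff i (Nat.lt_succ_iff.1 (mem_range.1 hi)) (Sym2.mem_toFinset.1 hxe)
  have hrim' : #(F \ F') ≤ m + 1 := by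
    have hsub : F \ F' ⊆ insert s(v m, v 0) (pathEdges m v) := by
      intro e he
      obtain ⟨heF, hon⟩ := mem_sdiff.1 he
      simp only [F', mem_filter, heF, true_and, not_forall, not_not] at hon
      obtain ⟨i, hi, hvi⟩ := hon
      exact hrim e heF ⟨i, hi, hvi⟩
    calc #(F \ F') ≤ #(insert s(v m, v 0) (pathEdges m v)) := card_le_card hsub
      _ ≤ #(pathEdges m v) + 1 := card_insert_le _ _
      _ ≤ m + 1 := by gcongr; exact card_image_le.trans (card_range m).le
  have h1 := card_le_card hV'
  rw [card_sdiff_of_subset hCV, hC] at h1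
  have h2 : #(F \ F') + #F' = #F := card_sdiff_add_card_eq_card (filter_subset _ _)
  have h3 := card_le_card hCV
  omega

theorem hasChordedPath_of_card_biUnion_toFinset_lt [Fintype V] (hF : ∀ e ∈ F, ¬e.IsDiag)
    (hcard : #(F.biUnion Sym2.toFinset) < #F) : HasChordedPath F := by
  induction F using Finset.strongInduction with | H F ih => ?_
  rcases em (∃ e ∈ F, ∃ x ∈ e, ∀ e' ∈ F, x ∈ e' → e' = e) with ⟨e, he, x, hx, hleaf⟩ | hdeg
  · exact (ih _ (erase_ssubset he) (fun e' he' => hF e' (mem_of_mem_erase he'))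
      (card_biUnion_toFinset_erase_lt he hx hleaf hcard)).mono (erase_subset e F)
  push Not at hdeg
  obtain ⟨e, he⟩ := card_pos.1 (Nat.zero_lt_of_lt hcard)
  induction e using Sym2.ind with | _ x y => ?_
  obtain ⟨m, v, hm, hL⟩ :=
    exists_isLongestPathIn (fun hxy => hF _ he (Sym2.mk_isDiag_iff.2 hxy)) he
  obtain ⟨a, ha, ham, hva⟩ := hL.exists_head_chord hm hF hdeg
  obtain ⟨b, hb, hvb⟩ := hL.exists_last_chord hm hF hdeg
  by_cases hab : a = m ∧ b = 0
  swap
  · exact hL.1.hasChordedPath ha ham hb hab hva hvb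
  -- Otherwise `v 0, …, v m` is a cycle: either some other edge meets it, or it is a whole
  -- component with as many edges as vertices, and removing it keeps `#V < #E`.
  have hclose : s(v m, v 0) ∈ F := by rwa [← hab.1, Sym2.eq_swap]
  by_cases hrim : ∀ e ∈ F, (∃ i ≤ m, v i ∈ e) → e ∈ insert s(v m, v 0) (pathEdges m v)
  · refine (ih _ (filter_ssubset.2 ⟨_, hL.1.2 0 hm, fun h => h 0 (Nat.zero_le _)
      (Sym2.mem_mk_left _ _)⟩) (fun e he => hF e (mem_of_mem_filter e he))
      (hL.1.card_biUnion_toFinset_filter_lt hclose hrim hcard)).mono (filter_subset _ _)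
  · push Not at hrim
    obtain ⟨e, he, ⟨i, hi, hvi⟩, hnot⟩ := hrim
    exact hL.hasChordedPath_of_not_mem_cycle hclose hF he hi hvi hnot

lemma IsChordedPath.card_chordedPathEdges (h : IsChordedPath m v a b) :
    #(chordedPathEdges m v a b) = m + 2 := by
  obtain ⟨hv, ha, ham, hb, hab⟩ := h
  have key : ∀ {i j k l}, i ≤ m → j ≤ m → k ≤ m → l ≤ m → s(v i, v j) = s(v k, v l) →
      i = k ∧ j = l ∨ i = l ∧ j = k := by
    intro i j k l hi hj hk hl h
    rcases Sym2.eq_iff.1 h with ⟨h1, h2⟩ | ⟨h1, h2⟩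
    · exact Or.inl ⟨hv hi hk h1, hv hj hl h2⟩
    · exact Or.inr ⟨hv hi hl h1, hv hj hk h2⟩
  have hpath : #(pathEdges m v) = m := by
    refine (card_image_of_injOn fun i hi j hj hij => ?_).trans (card_range m)
    simp only [coe_range, Set.mem_Iio] at hi hj
    have := key (by omega) (by omega) (by omega) (by omega) hij
    omega
  rw [chordedPathEdges, card_insert_of_notMem, card_insert_of_notMem, hpath]
  · simp only [pathEdges, mem_image, mem_range, not_exists, not_and]
    intro i hi hi'
    have := key (by omega) (by omega) le_rfl (by omega) hi'
    omega
  · simp only [mem_insert, pathEdges, mem_image, mem_range, not_or, not_exists, not_and]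
    refine ⟨fun h' => ?_, fun i hi hi' => ?_⟩
    · have := key (Nat.zero_le _) ham le_rfl (by omega) h'
      omega
    · have := key (by omega) (by omega) (Nat.zero_le _) ham hi'
      omega

lemma chordedPathEdges_congr {v' : ℕ → V} (hvv : Set.EqOn v v' (Set.Iic m)) (ha : a ≤ m)
    (hb : b ≤ m) : chordedPathEdges m v a b = chordedPathEdges m v' a b := by
  rw [chordedPathEdges, chordedPathEdges, pathEdges, pathEdges, hvv (Nat.zero_le m), hvv ha,
    hvv (le_refl m), hvv hb, image_congr fun i hi => ?_]
  simp only [coe_range, Set.mem_Iio] at hi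
  rw [hvv hi.le, hvv (Nat.succ_le_of_lt hi)]

-- Indexing the path by `Fin (m + 1)` leaves finitely many candidates of each length.
open Fin.NatCast in
lemma HasChordedPath.exists_fin (h : HasChordedPath F) :
    ∃ m, ∃ w : Fin (m + 1) → V, ∃ a b : Fin (m + 1),
      IsChordedPath m (fun i : ℕ => w i) a b ∧ chordedPathEdges m (fun i : ℕ => w i) a b ⊆ F := by
  obtain ⟨m, v, a, b, hv, hF⟩ := h
  have hval {i : ℕ} (hi : i ≤ m) : ((i : Fin (m + 1)) : ℕ) = i := by
    rw [Fin.val_natCast, Nat.mod_eq_of_lt (Nat.lt_succ_of_le hi)]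
  have hvv : Set.EqOn v (fun i : ℕ => v ((i : Fin (m + 1)) : ℕ)) (Set.Iic m) :=
    fun i hi => (congrArg v (hval hi)).symm
  have ham : a ≤ m := hv.2.2.1
  have hbm : b ≤ m := by have := hv.2.2.2.1; omega
  refine ⟨m, fun j => v j, a, b, ?_, ?_⟩
  · rw [hval ham, hval hbm]
    exact hv.congr hvv
  · rw [hval ham, hval hbm, ← chordedPathEdges_congr hvv ham hbm]
    exact hF

lemma exists_injOn_mem_of_forall_card_le
    (hF : ∀ S ⊆ F, #S ≤ #(S.biUnion Sym2.toFinset)) :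
    ∃ g : Sym2 V → V, (∀ e ∈ F, g e ∈ e) ∧ Set.InjOn g F := by
  have hall (S : Finset F) : #S ≤ #(S.biUnion fun e => (e : Sym2 V).toFinset) := by
    have := hF (S.image Subtype.val) fun e he => by
      obtain ⟨e, -, rfl⟩ := mem_image.1 he
      exact e.2
    rwa [card_image_of_injective _ Subtype.val_injective, image_biUnion] at this
  obtain ⟨f, hf, hfF⟩ := (all_card_le_biUnion_card_iff_exists_injective _).1 hall
  refine ⟨fun e => if he : e ∈ F then f ⟨e, he⟩ else (Quot.out e).1, fun e he => ?_,
    fun e he e' he' hee' => ?_⟩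
  · simpa [dif_pos he] using hfF ⟨e, he⟩
  · simp only [mem_coe] at he he'
    simp only [dif_pos he, dif_pos he'] at hee'
    exact congrArg Subtype.val (hf hee')

lemma exists_injOn_mem_of_not_hasChordedPath [Fintype V] (hF : ∀ e ∈ F, ¬e.IsDiag)
    (h : ¬HasChordedPath F) : ∃ g : Sym2 V → V, (∀ e ∈ F, g e ∈ e) ∧ Set.InjOn g F :=
  exists_injOn_mem_of_forall_card_le fun _ hS => not_lt.1 fun hlt =>
    h ((hasChordedPath_of_card_biUnion_toFinset_lt (fun e he => hF e (hS he)) hlt).mono hS)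

end ChordedPath

lemma Sym2.injective_mk_of_lt {V : Type*} [LinearOrder V] :
    Function.Injective fun e : {e : V × V // e.1 < e.2} => s(e.1.1, e.1.2) := by
  rintro ⟨⟨x, y⟩, hxy⟩ ⟨⟨z, w⟩, hzw⟩ h
  rcases Sym2.eq_iff.1 h with ⟨rfl, rfl⟩ | ⟨rfl, rfl⟩
  · rfl
  · exact absurd hxy (lt_asymm hzw)

section ErdosRenyi

variable {n : ℕ}

def graphEdges (ω : EdgeSpace n) : Finset (Sym2 (Fin n)) :=
  (univ.filter fun e => ω e).image fun e => s(e.1.1, e.1.2)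

lemma mk_mem_graphEdges_iff {ω : EdgeSpace n} {e : {e : Fin n × Fin n // e.1 < e.2}} :
    s(e.1.1, e.1.2) ∈ graphEdges ω ↔ ω e = true := by
  simp [graphEdges, Sym2.injective_mk_of_lt.eq_iff]

lemma not_isDiag_of_mem_graphEdges {ω : EdgeSpace n} {e : Sym2 (Fin n)}
    (he : e ∈ graphEdges ω) : ¬e.IsDiag := by
  obtain ⟨e, -, rfl⟩ := mem_image.1 he
  exact fun h => e.2.ne (Sym2.mk_isDiag_iff.1 h)

lemma adjMatrix_apply_eq_ite (ω : EdgeSpace n) (i j : Fin n) :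
    adjMatrix ω i j = if s(i, j) ∈ graphEdges ω then 1 else 0 := by
  rcases lt_trichotomy i j with h | rfl | h
  · simp [adjMatrix, h, mk_mem_graphEdges_iff (e := ⟨(i, j), h⟩)]
  · simpa [adjMatrix] using fun h => not_isDiag_of_mem_graphEdges h (Sym2.mk_isDiag_iff.2 rfl)
  · simp [adjMatrix, h, not_lt_of_gt h, Sym2.eq_swap (a := i),
      mk_mem_graphEdges_iff (e := ⟨(j, i), h⟩)]

lemma bernoulliMeasure_singleton_true (a : ℝ) : bernoulliMeasure a {true} = ENNReal.ofReal a := by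
  simp [bernoulliMeasure]

lemma isProbabilityMeasure_bernoulliMeasure {a : ℝ} (ha0 : 0 ≤ a) (ha1 : a ≤ 1) :
    IsProbabilityMeasure (bernoulliMeasure a) :=
  ⟨by simp [bernoulliMeasure, ← ENNReal.ofReal_add ha0 (sub_nonneg.2 ha1)]⟩

lemma isProbabilityMeasure_erMeasure {a : ℝ} (ha0 : 0 ≤ a) (ha1 : a ≤ 1) :
    IsProbabilityMeasure (erMeasure n a) :=
  have := isProbabilityMeasure_bernoulliMeasure ha0 ha1
  Measure.pi.instIsProbabilityMeasure _

lemma erMeasure_setOf_subset_graphEdges_le {a : ℝ} (ha0 : 0 ≤ a) (ha1 : a ≤ 1)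
    (S : Finset (Sym2 (Fin n))) :
    erMeasure n a {ω | S ⊆ graphEdges ω} ≤ ENNReal.ofReal a ^ #S := by
  by_cases hS : ∀ e ∈ S, ¬e.IsDiag
  swap
  · push Not at hS
    obtain ⟨e, he, hdiag⟩ := hS
    have : {ω | S ⊆ graphEdges ω} = ∅ :=
      Set.eq_empty_of_forall_notMem fun ω hω => not_isDiag_of_mem_graphEdges (hω he) hdiag
    simp [this]
  set T := univ.filter fun e : {e : Fin n × Fin n // e.1 < e.2} => s(e.1.1, e.1.2) ∈ S
  have hT : T.image (fun e => s(e.1.1, e.1.2)) = S := by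
    refine (image_subset_iff.2 fun e he => (mem_filter.1 he).2).antisymm fun t ht => ?_
    induction t using Sym2.ind with | _ x y => ?_
    rcases lt_or_gt_of_ne fun hxy => hS _ ht (Sym2.mk_isDiag_iff.2 hxy) with h | h
    · exact mem_image.2 ⟨⟨(x, y), h⟩, mem_filter.2 ⟨mem_univ _, ht⟩, rfl⟩
    · exact mem_image.2 ⟨⟨(y, x), h⟩, mem_filter.2 ⟨mem_univ _, Sym2.eq_swap ▸ ht⟩,
        Sym2.eq_swap⟩
  have hset : {ω | S ⊆ graphEdges ω} =
      Set.univ.pi fun e => if s(e.1.1, e.1.2) ∈ S then {true} else Set.univ := by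
    ext ω
    simp only [Set.mem_ofPred_eq, Set.mem_pi, Set.mem_univ, true_implies]
    refine ⟨fun h e => ?_, fun h t ht => ?_⟩
    · split_ifs with he
      exacts [mk_mem_graphEdges_iff.1 (h he), trivial]
    · obtain ⟨e, he, rfl⟩ := mem_image.1 (hT ▸ ht)
      have := h e
      rw [if_pos (mem_filter.1 he).2] at this
      exact mk_mem_graphEdges_iff.2 this
  have := isProbabilityMeasure_bernoulliMeasure ha0 ha1
  have hcard : #T = #S := by rw [← hT, card_image_of_injective _ Sym2.injective_mk_of_lt]
  rw [hset, erMeasure, Measure.pi_pi]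
  simp only [apply_ite, bernoulliMeasure_singleton_true, measure_univ]
  rw [prod_ite, prod_const_one, mul_one, prod_const]
  exact (congrArg _ hcard).le

open Fin.NatCast in
lemma erMeasure_hasChordedPath_le {a : ℝ} (ha0 : 0 ≤ a) (ha1 : a ≤ 1) :
    erMeasure n a {ω | HasChordedPath (graphEdges ω)} ≤
      ∑' m : ℕ, ENNReal.ofReal (n ^ (m + 1) * (m + 1) ^ 2 * a ^ (m + 2)) := by
  let B (m : ℕ) (x : (Fin (m + 1) → Fin n) × Fin (m + 1) × Fin (m + 1)) : Set (EdgeSpace n) :=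
    {ω | IsChordedPath m (fun i : ℕ => x.1 i) x.2.1 x.2.2 ∧
      chordedPathEdges m (fun i : ℕ => x.1 i) x.2.1 x.2.2 ⊆ graphEdges ω}
  have hsub : {ω | HasChordedPath (graphEdges ω)} ⊆ ⋃ m, ⋃ x, B m x := fun ω hω => by
    obtain ⟨m, w, a, b, h⟩ := hω.exists_fin
    exact Set.mem_iUnion₂.2 ⟨m, (w, a, b), h⟩
  have hB (m : ℕ) (x) : erMeasure n a (B m x) ≤ ENNReal.ofReal a ^ (m + 2) := by
    by_cases hx : IsChordedPath m (fun i : ℕ => x.1 i) x.2.1 x.2.2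
    · rw [← hx.card_chordedPathEdges]
      exact (measure_mono fun ω hω => hω.2).trans (erMeasure_setOf_subset_graphEdges_le ha0 ha1 _)
    · simp [B, hx]
  refine (measure_mono hsub).trans ((measure_iUnion_le _).trans
    (ENNReal.tsum_le_tsum fun m => (measure_iUnion_fintype_le _ _).trans ?_))
  calc ∑ x, erMeasure n a (B m x) ≤ ∑ _x, ENNReal.ofReal a ^ (m + 2) :=
        sum_le_sum fun x _ => hB m x
    _ = ENNReal.ofReal (n ^ (m + 1) * (m + 1) ^ 2 * a ^ (m + 2)) := by
        rw [sum_const, card_univ, nsmul_eq_mul, ← ENNReal.ofReal_pow ha0,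
          ← ENNReal.ofReal_natCast, ← ENNReal.ofReal_mul (Nat.cast_nonneg _)]
        simp only [Fintype.card_prod, Fintype.card_pi, Fintype.card_fin, prod_const, card_univ]
        push_cast
        ring_nf

lemma div_natCast_le_one {p : ℝ} (hp : p ≤ 1) (n : ℕ) : p / n ≤ 1 := by
  rcases n.eq_zero_or_pos with rfl | hn
  · simp
  · exact div_le_one_of_le₀ (hp.trans (Nat.one_le_cast.2 hn)) n.cast_nonneg

lemma isProbabilityMeasure_erMeasure_div {p : ℝ} (hp0 : 0 ≤ p) (hp1 : p ≤ 1) (n : ℕ) :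
    IsProbabilityMeasure (erMeasure n (p / n)) :=
  isProbabilityMeasure_erMeasure (div_nonneg hp0 n.cast_nonneg) (div_natCast_le_one hp1 n)

lemma exists_erMeasure_hasChordedPath_le_div {r : ℝ} (hr0 : 0 ≤ r) (hr1 : r < 1) :
    ∃ C : ℝ≥0∞, C ≠ ⊤ ∧ ∀ n : ℕ, n ≠ 0 → ∀ p ∈ Set.Icc 0 r,
      erMeasure n (p / n) {ω | HasChordedPath (graphEdges ω)} ≤ C / n := by
  set f : ℕ → ℝ := fun m => (m + 1) ^ 2 * r ^ (m + 2)
  have hf : Summable f := by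
    have h := summable_pow_mul_geometric_of_norm_lt_one (R := ℝ) 2 (r := r)
      (by rwa [Real.norm_of_nonneg hr0])
    refine (((summable_nat_add_iff (f := fun m : ℕ => (m : ℝ) ^ 2 * r ^ m) 1).2 h).mul_right
      r).congr fun m => ?_
    simp only [f]
    push_cast
    ring
  refine ⟨∑' m, ENNReal.ofReal (f m), by
    rw [← ENNReal.ofReal_tsum_of_nonneg (fun m => by positivity) hf]; exact ENNReal.ofReal_ne_top,
    fun n hn p hp => ?_⟩
  have hn' : (0 : ℝ) < n := Nat.cast_pos.2 (Nat.pos_of_ne_zero hn)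
  refine (erMeasure_hasChordedPath_le (div_nonneg hp.1 hn'.le)
    (div_natCast_le_one (hp.2.trans hr1.le) n)).trans ?_
  rw [ENNReal.div_eq_inv_mul, ← ENNReal.tsum_mul_left]
  refine ENNReal.tsum_le_tsum fun m => ?_
  rw [← ENNReal.ofReal_natCast, ← ENNReal.ofReal_inv_of_pos hn',
    ← ENNReal.ofReal_mul (by positivity)]
  refine ENNReal.ofReal_le_ofReal ?_
  calc (n : ℝ) ^ (m + 1) * (m + 1) ^ 2 * (p / n) ^ (m + 2)
      = (n : ℝ)⁻¹ * ((m + 1) ^ 2 * p ^ (m + 2)) := by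
        rw [div_pow, pow_succ (n : ℝ) (m + 1)]
        field_simp
    _ ≤ (n : ℝ)⁻¹ * ((m + 1) ^ 2 * r ^ (m + 2)) := by
        gcongr
        exacts [hp.1, hp.2]

theorem sr_Kmat_adjMatrix_le {c : ℝ} (hc : 0 < c) {ω : EdgeSpace n}
    (hω : ¬HasChordedPath (graphEdges ω)) : sr (Kmat c (adjMatrix ω)) ≤ 1 / √(1 + c) := by
  have hloop (e) (he : e ∈ graphEdges ω) := not_isDiag_of_mem_graphEdges he
  obtain ⟨g, hgF, hg⟩ := exists_injOn_mem_of_not_hasChordedPath hloop hω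
  have hs : 0 < √(1 + c) := Real.sqrt_pos.2 (by linarith)
  refine sr_Kmat_le_of_sum_mul_mul_le (fun i j => ?_) hc (by positivity) fun u _ => ?_
  · rw [adjMatrix_apply_eq_ite]
    split_ifs <;> norm_num
  · rw [div_mul_eq_mul_div, one_mul, le_div_iff₀ hs, mul_comm]
    exact sqrt_one_add_mul_sum_sum_le hc.le hloop (adjMatrix_apply_eq_ite ω) hgF hg u

lemma one_sub_measure_hasChordedPath_le {c : ℝ} (hc : 0 < c) (μ : Measure (EdgeSpace n))
    [IsProbabilityMeasure μ] :
    1 - μ {ω | HasChordedPath (graphEdges ω)} ≤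
      μ {ω | sr (Kmat c (adjMatrix ω)) ≤ 1 / √(1 + c)} := by
  rw [← prob_compl_eq_one_sub .of_discrete]
  exact measure_mono fun ω hω => sr_Kmat_adjMatrix_le hc hω

end ErdosRenyi

/-- For fixed c > 0 and 0 < p₀ < p₁ < 1,
inf_{p ∈ [p₀,p₁]} P_p{ sr(K_n) ≤ 1/√(1+c) } → 1 as n → ∞. -/
theorem erdos_renyi_markov_spectral_radius_uniform_in_p
    (c : ℝ) (hc : 0 < c) (p₀ p₁ : ℝ) (hp₀ : 0 < p₀) (hp : p₀ < p₁) (hp₁ : p₁ < 1) :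
    Filter.Tendsto
      (fun n : ℕ =>
        ⨅ p ∈ Set.Icc p₀ p₁,
          erMeasure n (p / n)
            {ω : EdgeSpace n | sr (Kmat c (adjMatrix ω)) ≤ 1 / Real.sqrt (1 + c)})
      Filter.atTop (nhds 1) := by
  obtain ⟨C, hC, hbad⟩ := exists_erMeasure_hasChordedPath_le_div (hp₀.trans hp).le hp₁
  have hlower (n : ℕ) (hn : n ≠ 0) : 1 - C / n ≤ ⨅ p ∈ Set.Icc p₀ p₁,
      erMeasure n (p / n) {ω : EdgeSpace n | sr (Kmat c (adjMatrix ω)) ≤ 1 / √(1 + c)} :=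
    le_iInf₂ fun p hp =>
      have := isProbabilityMeasure_erMeasure_div (hp₀.le.trans hp.1) (hp.2.trans hp₁.le) n
      (tsub_le_tsub_left (hbad n hn p ⟨hp₀.le.trans hp.1, hp.2⟩) 1).trans
        (one_sub_measure_hasChordedPath_le hc _)
  have hupper (n : ℕ) : ⨅ p ∈ Set.Icc p₀ p₁,
      erMeasure n (p / n) {ω : EdgeSpace n | sr (Kmat c (adjMatrix ω)) ≤ 1 / √(1 + c)} ≤ 1 :=
    have := isProbabilityMeasure_erMeasure_div hp₀.le (hp.trans hp₁).le n
    (iInf₂_le p₀ ⟨le_rfl, hp.le⟩).trans prob_le_one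
  have hlim : Tendsto (fun n : ℕ => 1 - C / n) atTop (nhds 1) := by
    simpa using ENNReal.Tendsto.sub tendsto_const_nhds
      (ENNReal.Tendsto.const_div ENNReal.tendsto_nat_nhds_top (Or.inr hC))
      (Or.inl ENNReal.one_ne_top)
  exact tendsto_of_tendsto_of_tendsto_of_le_of_le' hlim tendsto_const_nhds
    ((eventually_ne_atTop 0).mono hlower) (Eventually.of_forall hupper)
end

section
/- Fix c > 0, p > 0, and an integer k ≥ 1. There exists a constant C, depending only on k, p, and c, such that for all n > p, Var[β_k(K_n)] ≤ C/n, where A_n is the adjacency matrix of a random graph following G(n, p/n) and K_n = D_n^{-1}A_n with D_n the diagonal matrix with diagonal c·1_n + A_n·1_n. -/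
open MeasureTheory Filter

/-!
Flipping one edge `e = {u, v}` changes only rows `u` and `v` of `K = D⁻¹A`, and each row of both
matrices is substochastic, so the two matrices differ by at most `4` in entrywise `ℓ¹` norm.
Since all products of substochastic matrices are substochastic, the telescoping identity
`K'^k - K^k = ∑ K'^a (K' - K) K^(k-1-a)` shows that `β_k` moves by at most `4k/n`.
The Efron–Stein inequality for the (at most `n²`) independent Bernoulli(`p/n`) edge indicators
then gives `Var β_k ≤ n² · (p/n) · (4k/n)² = 16pk²/n`.
-/

open Finset Function

def bernoulliWeight (q : ℝ) (b : Bool) : ℝ := if b then q else 1 - q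

lemma sum_bernoulliWeight (q : ℝ) : ∑ b, bernoulliWeight q b = 1 := by
  simp [bernoulliWeight]

lemma bernoulliWeight_nonneg {q : ℝ} (hq0 : 0 ≤ q) (hq1 : q ≤ 1) (b : Bool) :
    0 ≤ bernoulliWeight q b := by
  cases b <;> simp [bernoulliWeight] <;> linarith

lemma bernoulliMeasure_real_singleton {q : ℝ} (hq0 : 0 ≤ q) (hq1 : q ≤ 1) (b : Bool) :
    (bernoulliMeasure q).real {b} = bernoulliWeight q b := by
  cases b <;> simp [bernoulliMeasure, bernoulliWeight, Measure.real, hq0, hq1]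

lemma isProbabilityMeasure_bernoulliMeasure_s15 {q : ℝ} (hq0 : 0 ≤ q) (hq1 : q ≤ 1) :
    IsProbabilityMeasure (bernoulliMeasure q) := by
  constructor
  simp [bernoulliMeasure, ← ENNReal.ofReal_add hq0 (sub_nonneg.2 hq1)]

section BernoulliAveraging

variable {ι : Type*} [DecidableEq ι] {q : ℝ}

/-- The conditional expectation of `g` given all coordinates but `i`, when coordinate `i` is
Bernoulli(`q`). -/
def avgCoord (q : ℝ) (i : ι) (g : (ι → Bool) → ℝ) (ω : ι → Bool) : ℝ :=
  ∑ b, bernoulliWeight q b * g (update ω i b)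

def avgCoords (q : ℝ) (L : List ι) (g : (ι → Bool) → ℝ) : (ι → Bool) → ℝ :=
  L.foldr (avgCoord q) g

@[simp]
lemma avgCoords_nil (q : ℝ) (g : (ι → Bool) → ℝ) : avgCoords q [] g = g := rfl

@[simp]
lemma avgCoords_cons (q : ℝ) (i : ι) (L : List ι) (g : (ι → Bool) → ℝ) :
    avgCoords q (i :: L) g = avgCoord q i (avgCoords q L g) := rfl

lemma avgCoord_mono (hq0 : 0 ≤ q) (hq1 : q ≤ 1) (i : ι) : Monotone (avgCoord q i) :=
  fun _ _ hgh _ => sum_le_sum fun b _ =>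
    mul_le_mul_of_nonneg_left (hgh _) (bernoulliWeight_nonneg hq0 hq1 b)

lemma avgCoords_mono (hq0 : 0 ≤ q) (hq1 : q ≤ 1) (L : List ι) : Monotone (avgCoords q L) := by
  induction L with
  | nil => exact monotone_id
  | cons i L ih => exact (avgCoord_mono hq0 hq1 i).comp ih

lemma avgCoord_const (q : ℝ) (i : ι) (r : ℝ) : avgCoord q i (fun _ => r) = fun _ => r := by
  funext ω
  simp only [avgCoord, ← sum_mul, sum_bernoulliWeight, one_mul]

lemma avgCoords_const (q : ℝ) (L : List ι) (r : ℝ) :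
    avgCoords q L (fun _ => r) = fun _ => r := by
  induction L with
  | nil => rfl
  | cons i L ih => rw [avgCoords_cons, ih, avgCoord_const]

lemma avgCoord_sub (q : ℝ) (i : ι) (g h : (ι → Bool) → ℝ) :
    avgCoord q i (g - h) = avgCoord q i g - avgCoord q i h := by
  funext ω
  simp [avgCoord, mul_sub, sum_sub_distrib]

lemma avgCoords_sub (q : ℝ) (L : List ι) (g h : (ι → Bool) → ℝ) :
    avgCoords q L (g - h) = avgCoords q L g - avgCoords q L h := by
  induction L with
  | nil => rfl
  | cons i L ih => rw [avgCoords_cons, ih, avgCoord_sub]; rfl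

lemma abs_avgCoords_le (hq0 : 0 ≤ q) (hq1 : q ≤ 1) (L : List ι) {g : (ι → Bool) → ℝ}
    {B : ℝ} (hg : ∀ ω, |g ω| ≤ B) (ω : ι → Bool) : |avgCoords q L g ω| ≤ B := by
  have lower := avgCoords_mono hq0 hq1 L
    (show (fun _ => -B) ≤ g from fun ω => neg_le_of_abs_le (hg ω)) ω
  have upper := avgCoords_mono hq0 hq1 L
    (show g ≤ fun _ => B from fun ω => le_of_abs_le (hg ω)) ω
  rw [avgCoords_const] at lower upper
  exact abs_le.2 ⟨lower, upper⟩

lemma avgCoord_comp_update {i j : ι} (hij : i ≠ j) (g : (ι → Bool) → ℝ) (b : Bool) :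
    avgCoord q j (fun ω => g (update ω i b)) = fun ω => avgCoord q j g (update ω i b) := by
  funext ω
  simp only [avgCoord, update_comm hij.symm]

lemma avgCoords_comp_update {i : ι} {L : List ι} (hi : i ∉ L) (g : (ι → Bool) → ℝ)
    (b : Bool) :
    avgCoords q L (fun ω => g (update ω i b)) = fun ω => avgCoords q L g (update ω i b) := by
  induction L with
  | nil => rfl
  | cons j L ih =>
    rw [List.mem_cons, not_or] at hi
    rw [avgCoords_cons, ih hi.2, avgCoord_comp_update hi.1]
    rfl

lemma avgCoord_sq (q : ℝ) (i : ι) (g : (ι → Bool) → ℝ) (ω : ι → Bool) :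
    avgCoord q i g ω ^ 2 =
      avgCoord q i (g ^ 2) ω -
        q * (1 - q) * (g (update ω i true) - g (update ω i false)) ^ 2 := by
  simp only [avgCoord, Fintype.sum_bool, bernoulliWeight, Pi.pow_apply, if_true,
    Bool.false_eq_true, if_false]
  ring

theorem avgCoords_sq_sub_sq_le (hq0 : 0 ≤ q) (hq1 : q ≤ 1) {L : List ι} (hL : L.Nodup)
    {f : (ι → Bool) → ℝ} {c : ι → ℝ}
    (hf : ∀ i ∈ L, ∀ ω, |f (update ω i true) - f (update ω i false)| ≤ c i) (ω : ι → Bool) :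
    avgCoords q L (f ^ 2) ω - avgCoords q L f ω ^ 2 ≤
      q * (1 - q) * (L.map (c · ^ 2)).sum := by
  induction L generalizing ω with
  | nil => simp
  | cons i L ih =>
    obtain ⟨hiL, hL⟩ := List.nodup_cons.1 hL
    set g := avgCoords q L f
    set bound := q * (1 - q) * (L.map (c · ^ 2)).sum
    have hinner : avgCoord q i (avgCoords q L (f ^ 2) - g ^ 2) ω ≤ bound := by
      have hvar : avgCoords q L (f ^ 2) - g ^ 2 ≤ fun _ => bound :=
        ih hL fun j hj => hf j (List.mem_cons_of_mem i hj)
      have := avgCoord_mono hq0 hq1 i hvar ω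
      rwa [avgCoord_const] at this
    have hincr : |g (update ω i true) - g (update ω i false)| ≤ c i := by
      have h := abs_avgCoords_le hq0 hq1 L
        (g := (fun ω => f (update ω i true)) - fun ω => f (update ω i false))
        (hf i List.mem_cons_self) ω
      rwa [avgCoords_sub, avgCoords_comp_update hiL, avgCoords_comp_update hiL] at h
    have hsq := pow_le_pow_left₀ (abs_nonneg _) hincr 2
    rw [sq_abs] at hsq
    rw [avgCoord_sub, Pi.sub_apply] at hinner
    rw [avgCoords_cons, avgCoords_cons, avgCoord_sq, List.map_cons, List.sum_cons]
    nlinarith [mul_le_mul_of_nonneg_left hsq (mul_nonneg hq0 (sub_nonneg.2 hq1))]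

variable [Fintype ι]

/-- The weight of `τ` in `avgCoords q L · ω`: Bernoulli on the coordinates in `L`, a point mass
at `ω` on the others. -/
def listWeight (q : ℝ) (L : List ι) (ω τ : ι → Bool) : ℝ :=
  ∏ i, if i ∈ L then bernoulliWeight q (τ i) else if τ i = ω i then 1 else 0

lemma listWeight_nil (q : ℝ) (ω τ : ι → Bool) :
    listWeight q [] ω τ = if τ = ω then 1 else 0 := by
  simp only [listWeight, List.not_mem_nil, if_false, prod_boole, mem_univ, true_implies,
    funext_iff]

lemma sum_bernoulliWeight_mul_listWeight_update {j : ι} {L : List ι} (hj : j ∉ L)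
    (ω τ : ι → Bool) :
    ∑ b, bernoulliWeight q b * listWeight q L (update ω j b) τ =
      listWeight q (j :: L) ω τ := by
  have hrest : ∀ b, ∏ i ∈ {j}ᶜ, (if i ∈ L then bernoulliWeight q (τ i)
      else if τ i = update ω j b i then 1 else 0) =
      ∏ i ∈ {j}ᶜ, (if i ∈ j :: L then bernoulliWeight q (τ i)
        else if τ i = ω i then 1 else 0) :=
    fun b => prod_congr rfl fun i hi => by
      have hij : i ≠ j := by simpa using hi
      simp [hij]
  simp only [listWeight, Fintype.prod_eq_mul_prod_compl j, hrest, hj, if_false,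
    List.mem_cons_self, if_true, update_self, ← mul_assoc, ← sum_mul]
  congr 1
  cases τ j <;> simp

lemma avgCoords_eq_sum {L : List ι} (hL : L.Nodup) (f : (ι → Bool) → ℝ) (ω : ι → Bool) :
    avgCoords q L f ω = ∑ τ, listWeight q L ω τ * f τ := by
  induction L generalizing ω with
  | nil => simp [listWeight_nil]
  | cons j L ih =>
    obtain ⟨hjL, hL⟩ := List.nodup_cons.1 hL
    simp only [avgCoords_cons, avgCoord, ih hL, mul_sum, ← mul_assoc]
    rw [sum_comm]
    simp only [← sum_mul, sum_bernoulliWeight_mul_listWeight_update hjL]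

lemma avgCoords_univ_eq_sum (f : (ι → Bool) → ℝ) (ω : ι → Bool) :
    avgCoords q univ.toList f ω = ∑ τ, (∏ i, bernoulliWeight q (τ i)) * f τ := by
  simp [avgCoords_eq_sum (nodup_toList univ), listWeight]

lemma integral_pi_bernoulliMeasure (hq0 : 0 ≤ q) (hq1 : q ≤ 1) (f : (ι → Bool) → ℝ) :
    ∫ ω, f ω ∂(Measure.pi fun _ : ι => bernoulliMeasure q) =
      ∑ τ, (∏ i, bernoulliWeight q (τ i)) * f τ := by
  rw [integral_fintype Integrable.of_finite]
  refine sum_congr rfl fun τ _ => ?_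
  rw [smul_eq_mul, ← Set.univ_pi_singleton τ, measureReal_def, Measure.pi_pi,
    ENNReal.toReal_prod]
  simp_rw [← measureReal_def, bernoulliMeasure_real_singleton hq0 hq1]

/-- The Efron–Stein inequality for independent Bernoulli(`q`) coordinates, in bounded-differences
form. -/
theorem variance_pi_bernoulliMeasure_le (hq0 : 0 ≤ q) (hq1 : q ≤ 1) {f : (ι → Bool) → ℝ}
    {c : ι → ℝ} (hf : ∀ i ω, |f (update ω i true) - f (update ω i false)| ≤ c i) :
    ProbabilityTheory.variance f (Measure.pi fun _ : ι => bernoulliMeasure q) ≤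
      q * (1 - q) * ∑ i, c i ^ 2 := by
  have := isProbabilityMeasure_bernoulliMeasure_s15 hq0 hq1
  rw [ProbabilityTheory.variance_eq_sub MemLp.of_discrete, integral_pi_bernoulliMeasure hq0 hq1,
    integral_pi_bernoulliMeasure hq0 hq1, ← avgCoords_univ_eq_sum _ fun _ => false,
    ← avgCoords_univ_eq_sum _ fun _ => false, ← sum_map_toList]
  exact avgCoords_sq_sub_sq_le hq0 hq1 (nodup_toList univ) (fun i _ => hf i) _

end BernoulliAveraging

theorem pow_sub_pow_eq_sum {R : Type*} [Ring R] (a b : R) (k : ℕ) :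
    b ^ k - a ^ k = ∑ i ∈ range k, b ^ i * (b - a) * a ^ (k - 1 - i) := by
  have htel := sum_range_sub (fun i => b ^ i * a ^ (k - i)) k
  simp only [Nat.sub_self, pow_zero, mul_one, one_mul, Nat.sub_zero] at htel
  rw [← htel]
  refine sum_congr rfl fun i hi => ?_
  obtain ⟨j, rfl⟩ : ∃ j, k = i + 1 + j := ⟨k - (i + 1), by grind⟩
  rw [show i + 1 + j - (i + 1) = j by omega, show i + 1 + j - i = j + 1 by omega,
    show i + 1 + j - 1 - i = j by omega, pow_succ, pow_succ']
  noncomm_ring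

namespace Matrix

variable {m : Type*} [Fintype m]

structure IsSubstochastic (M : Matrix m m ℝ) : Prop where
  nonneg : ∀ i j, 0 ≤ M i j
  sum_row_le_one : ∀ i, ∑ j, M i j ≤ 1

namespace IsSubstochastic

variable {M N : Matrix m m ℝ}

lemma one [DecidableEq m] : IsSubstochastic (1 : Matrix m m ℝ) where
  nonneg i j := by rw [one_apply]; split_ifs <;> norm_num
  sum_row_le_one i := by simp [one_apply]

lemma mul (hM : M.IsSubstochastic) (hN : N.IsSubstochastic) : (M * N).IsSubstochastic where
  nonneg i j := sum_nonneg fun l _ => mul_nonneg (hM.nonneg i l) (hN.nonneg l j)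
  sum_row_le_one i :=
    calc ∑ j, (M * N) i j = ∑ l, M i l * ∑ j, N l j := by
          simp only [mul_apply, mul_sum]; exact sum_comm
      _ ≤ ∑ l, M i l := sum_le_sum fun l _ =>
          mul_le_of_le_one_right (hM.nonneg i l) (hN.sum_row_le_one l)
      _ ≤ 1 := hM.sum_row_le_one i

lemma pow [DecidableEq m] (hM : M.IsSubstochastic) (k : ℕ) : (M ^ k).IsSubstochastic := by
  induction k with
  | zero => simpa using one
  | succ k ih => simpa [pow_succ] using ih.mul hM

lemma le_one (hM : M.IsSubstochastic) (i j : m) : M i j ≤ 1 :=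
  (single_le_sum (fun l _ => hM.nonneg i l) (mem_univ j)).trans (hM.sum_row_le_one i)

lemma sum_abs_sub_le_two (hM : M.IsSubstochastic) (hN : N.IsSubstochastic) (i : m) :
    ∑ j, |M i j - N i j| ≤ 2 :=
  calc ∑ j, |M i j - N i j| ≤ ∑ j, (M i j + N i j) := sum_le_sum fun j _ =>
        abs_sub_le_iff.2 ⟨by linarith [hN.nonneg i j], by linarith [hM.nonneg i j]⟩
    _ = ∑ j, M i j + ∑ j, N i j := sum_add_distrib
    _ ≤ 2 := by linarith [hM.sum_row_le_one i, hN.sum_row_le_one i]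

lemma abs_trace_mul_le (hM : M.IsSubstochastic) (D : Matrix m m ℝ) :
    |trace (M * D)| ≤ ∑ i, ∑ j, |D i j| :=
  calc |trace (M * D)| = |∑ i, ∑ l, M i l * D l i| := by simp [trace, mul_apply]
    _ ≤ ∑ i, ∑ l, |D l i| := (abs_sum_le_sum_abs _ _).trans <| sum_le_sum fun i _ =>
        (abs_sum_le_sum_abs _ _).trans <| sum_le_sum fun l _ => by
          rw [abs_mul, abs_of_nonneg (hM.nonneg i l)]
          exact mul_le_of_le_one_left (abs_nonneg _) (hM.le_one i l)
    _ = ∑ i, ∑ j, |D i j| := sum_comm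

end IsSubstochastic

theorem abs_trace_pow_sub_trace_pow_le [DecidableEq m] {M N : Matrix m m ℝ}
    (hM : M.IsSubstochastic) (hN : N.IsSubstochastic) (k : ℕ) :
    |trace (M ^ k) - trace (N ^ k)| ≤ k * ∑ i, ∑ j, |M i j - N i j| :=
  calc |trace (M ^ k) - trace (N ^ k)|
      = |∑ a ∈ range k, trace (M ^ a * (M - N) * N ^ (k - 1 - a))| := by
        rw [← trace_sub, pow_sub_pow_eq_sum, trace_sum]
    _ ≤ ∑ a ∈ range k, ∑ i, ∑ j, |M i j - N i j| :=
        (abs_sum_le_sum_abs _ _).trans <| sum_le_sum fun a _ => by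
          rw [trace_mul_cycle]
          exact ((hN.pow _).mul (hM.pow a)).abs_trace_mul_le _
    _ = k * ∑ i, ∑ j, |M i j - N i j| := by simp

end Matrix

section RandomGraph

variable {n : ℕ}

lemma adjMatrix_nonneg (ω : EdgeSpace n) (i j : Fin n) : 0 ≤ adjMatrix ω i j := by
  simp only [adjMatrix, Matrix.of_apply]
  split_ifs <;> norm_num

lemma adjMatrix_update_apply_of_ne (ω : EdgeSpace n) (e : {e : Fin n × Fin n // e.1 < e.2})
    (b : Bool) {i : Fin n} (h₁ : i ≠ e.1.1) (h₂ : i ≠ e.1.2) (j : Fin n) :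
    adjMatrix (update ω e b) i j = adjMatrix ω i j := by
  have hne : ∀ x y (h : x < y), (x = i ∨ y = i) →
      (⟨(x, y), h⟩ : {e : Fin n × Fin n // e.1 < e.2}) ≠ e := by
    rintro x y h hxy rfl
    rcases hxy with rfl | rfl
    exacts [h₁ rfl, h₂ rfl]
  simp only [adjMatrix, Matrix.of_apply]
  by_cases hij : i < j
  · rw [dif_pos hij, dif_pos hij, update_of_ne (hne _ _ hij (Or.inl rfl))]
  by_cases hji : j < i
  · rw [dif_neg hij, dif_neg hij, dif_pos hji, dif_pos hji,
      update_of_ne (hne _ _ hji (Or.inr rfl))]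
  · rw [dif_neg hij, dif_neg hij, dif_neg hji, dif_neg hji]

lemma isSubstochastic_Kmat {c : ℝ} (hc : 0 < c) {A : Matrix (Fin n) (Fin n) ℝ}
    (hA : ∀ i j, 0 ≤ A i j) : (Kmat c A).IsSubstochastic := by
  have hD : ∀ i, 0 < c + ∑ l, A i l := fun i => add_pos_of_pos_of_nonneg hc
    (sum_nonneg fun l _ => hA i l)
  refine ⟨fun i j => div_nonneg (hA i j) (hD i).le, fun i => ?_⟩
  simp only [Kmat, Matrix.of_apply, ← sum_div]
  exact (div_le_one (hD i)).2 (by linarith)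

lemma sum_abs_Kmat_update_sub_le {c : ℝ} (hc : 0 < c) (ω : EdgeSpace n)
    (e : {e : Fin n × Fin n // e.1 < e.2}) :
    ∑ i, ∑ j, |Kmat c (adjMatrix (update ω e true)) i j -
      Kmat c (adjMatrix (update ω e false)) i j| ≤ 4 := by
  have hK := fun b => isSubstochastic_Kmat hc (adjMatrix_nonneg (update ω e b))
  have hrows : ∀ i ∉ ({e.1.1, e.1.2} : Finset (Fin n)),
      ∑ j, |Kmat c (adjMatrix (update ω e true)) i j -
        Kmat c (adjMatrix (update ω e false)) i j| = 0 := by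
    intro i hi
    simp only [mem_insert, mem_singleton, not_or] at hi
    simp [Kmat, adjMatrix_update_apply_of_ne _ _ _ hi.1 hi.2]
  rw [← sum_subset (subset_univ _) fun i _ hi => hrows i hi, sum_pair e.2.ne]
  linarith [(hK true).sum_abs_sub_le_two (hK false) e.1.1,
    (hK true).sum_abs_sub_le_two (hK false) e.1.2]

lemma abs_trace_Kmat_pow_update_sub_le {c : ℝ} (hc : 0 < c) (ω : EdgeSpace n)
    (e : {e : Fin n × Fin n // e.1 < e.2}) (k : ℕ) :
    |Matrix.trace (Kmat c (adjMatrix (update ω e true)) ^ k) -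
      Matrix.trace (Kmat c (adjMatrix (update ω e false)) ^ k)| ≤ 4 * k :=
  calc _ ≤ k * ∑ i, ∑ j, |Kmat c (adjMatrix (update ω e true)) i j -
          Kmat c (adjMatrix (update ω e false)) i j| :=
        Matrix.abs_trace_pow_sub_trace_pow_le (isSubstochastic_Kmat hc (adjMatrix_nonneg _))
          (isSubstochastic_Kmat hc (adjMatrix_nonneg _)) k
    _ ≤ k * 4 := by gcongr; exact sum_abs_Kmat_update_sub_le hc ω e
    _ = 4 * k := mul_comm _ _

end RandomGraph

theorem variance_of_esd_moment_le_general
    (c p : ℝ) (hc : 0 < c) (hp : 0 < p) (k : ℕ) :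
    ∃ C : ℝ, ∀ n : ℕ, p < n →
      ProbabilityTheory.variance
        (fun ω : EdgeSpace n => (n : ℝ)⁻¹ * Matrix.trace ((Kmat c (adjMatrix ω)) ^ k))
        (erMeasure n (p / n))
      ≤ C / n := by
  refine ⟨16 * p * k ^ 2, fun n hn => ?_⟩
  have hn0 : (0 : ℝ) < n := hp.trans hn
  have hq0 : 0 ≤ p / n := by positivity
  have hq1 : p / n ≤ 1 := (div_le_one hn0).2 hn.le
  have hflip : ∀ e (ω : EdgeSpace n),
      |(n : ℝ)⁻¹ * Matrix.trace (Kmat c (adjMatrix (update ω e true)) ^ k) -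
        (n : ℝ)⁻¹ * Matrix.trace (Kmat c (adjMatrix (update ω e false)) ^ k)| ≤
      (n : ℝ)⁻¹ * (4 * k) := fun e ω => by
    rw [← mul_sub, abs_mul, abs_inv, Nat.abs_cast]
    exact mul_le_mul_of_nonneg_left (abs_trace_Kmat_pow_update_sub_le hc ω e k) (by positivity)
  have hcard : (Fintype.card {e : Fin n × Fin n // e.1 < e.2} : ℝ) ≤ n ^ 2 := by
    exact_mod_cast (Fintype.card_subtype_le _).trans (by simp [sq])
  calc _ ≤ p / n * (1 - p / n) *
        ∑ _e : {e : Fin n × Fin n // e.1 < e.2}, ((n : ℝ)⁻¹ * (4 * k)) ^ 2 :=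
        variance_pi_bernoulliMeasure_le hq0 hq1 hflip
    _ ≤ p / n * (n ^ 2 * ((n : ℝ)⁻¹ * (4 * k)) ^ 2) := by
        rw [sum_const, nsmul_eq_mul, card_univ]
        exact mul_le_mul (mul_le_of_le_one_right hq0 (by linarith)) (by gcongr) (by positivity) hq0
    _ = 16 * p * k ^ 2 / n := by field_simp; ring

/-- for fixed c > 0, p > 0 and k ≥ 1 there is a constant C
(depending only on k, p, c) with Var[β_k(K_n)] ≤ C/n for all n > p, where
β_k(M) = n⁻¹ tr(M^k). -/
theorem variance_of_esd_moment_le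
    (c p : ℝ) (hc : 0 < c) (hp : 0 < p) (k : ℕ) (hk : 1 ≤ k) :
    ∃ C : ℝ, ∀ n : ℕ, p < n →
      ProbabilityTheory.variance
        (fun ω : EdgeSpace n => (n : ℝ)⁻¹ * Matrix.trace ((Kmat c (adjMatrix ω)) ^ k))
        (erMeasure n (p / n))
      ≤ C / n :=
  variance_of_esd_moment_le_general c p hc hp k
end

section
/- Fix p > 0 and an integer k ≥ 0. For n > p let G be a random graph following G(n, p/n) and let s be a fixed vertex. Then the expected number of vertices u whose graph distance from s in G is at most k satisfies E|{u : dist_G(s,u) ≤ k}| ≤ 1 + p + p² + … + p^k. -/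
open MeasureTheory Filter

/-- The Erdős–Rényi random graph determined by a point of the sample space. -/
def erGraph {n : ℕ} (ω : EdgeSpace n) : SimpleGraph (Fin n) :=
  SimpleGraph.fromRel (fun i j => ∃ h : i < j, ω ⟨(i, j), h⟩ = true)

/-! Every vertex at distance `i ≤ k` from `s` is the endpoint of a shortest path
`s = v₀, v₁, …, vᵢ`, a sequence of distinct vertices with consecutive ones adjacent. Hence the
ball has at most `∑_{i ≤ k} Nᵢ` vertices, where `Nᵢ` counts such sequences of length `i` starting
at `s`. A fixed injective sequence is a path of `G(n, p/n)` exactly when its `i` distinct edges are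
present, which has probability `(p/n)^i`, and there are `n^i` sequences starting at `s`; so
`E Nᵢ ≤ n^i (p/n)^i = p^i`. -/

open Finset

namespace SimpleGraph

variable {V : Type*} (G : SimpleGraph V)

def IsPathSeq {i : ℕ} (v : Fin (i + 1) → V) : Prop :=
  Function.Injective v ∧ ∀ j : Fin i, G.Adj (v j.castSucc) (v j.succ)

open Classical in
noncomputable def numPathsFrom [Fintype V] (s : V) (i : ℕ) : ℕ :=
  #{w : Fin i → V | G.IsPathSeq (Fin.cons s w : Fin (i + 1) → V)}

variable {G}

lemma Reachable.exists_isPathSeq_dist {s u : V} (h : G.Reachable s u) :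
    ∃ v : Fin (G.dist s u + 1) → V, G.IsPathSeq v ∧ v 0 = s ∧ v (Fin.last _) = u := by
  obtain ⟨p, hp, hlen⟩ := h.exists_path_of_dist
  refine ⟨fun j => p.getVert j, ⟨fun j j' hjj' => Fin.ext ?_, fun j => ?_⟩, p.getVert_zero, ?_⟩
  · exact hp.getVert_injOn (by simp only [Set.mem_ofPred_eq]; omega)
      (by simp only [Set.mem_ofPred_eq]; omega) hjj'
  · simpa using p.adj_getVert_succ (i := j) (by omega)
  · simpa [hlen] using p.getVert_length

open Classical in
lemma ncard_ball_le_sum_numPathsFrom [Fintype V] (s : V) (k : ℕ) :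
    {u | G.Reachable s u ∧ G.dist s u ≤ k}.ncard ≤ ∑ i ∈ range (k + 1), G.numPathsFrom s i := by
  calc {u | G.Reachable s u ∧ G.dist s u ≤ k}.ncard
      ≤ #((range (k + 1)).biUnion fun i =>
          image (fun w : Fin i → V => (Fin.cons s w : Fin (i + 1) → V) (Fin.last i))
            {w : Fin i → V | G.IsPathSeq (Fin.cons s w : Fin (i + 1) → V)}) := by
        rw [← Set.ncard_coe_finset]
        refine Set.ncard_le_ncard (fun u ⟨hu, hk⟩ => ?_) (finite_toSet _)
        obtain ⟨v, hv, hv0, hvu⟩ := hu.exists_isPathSeq_dist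
        have hv_cons : Fin.cons s (Fin.tail v) = v := by simpa [hv0] using Fin.cons_self_tail v
        simp only [coe_biUnion, coe_range, Set.mem_Iio, coe_image, coe_filter, mem_univ, true_and,
          Set.mem_iUnion, Set.mem_image, Set.mem_ofPred_eq]
        exact ⟨_, by omega, Fin.tail v, by rwa [hv_cons], by rw [hv_cons, hvu]⟩
    _ ≤ _ := card_biUnion_le.trans (sum_le_sum fun i _ => card_image_le)

end SimpleGraph

lemma isProbabilityMeasure_bernoulliMeasure_s16 {a : ℝ} (h0 : 0 ≤ a) (h1 : a ≤ 1) :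
    IsProbabilityMeasure (bernoulliMeasure a) :=
  ⟨by simp [bernoulliMeasure, ← ENNReal.ofReal_add h0 (sub_nonneg.2 h1)]⟩

lemma pi_bernoulliMeasure_forall_true {ι : Type*} [Fintype ι] {a : ℝ} (h0 : 0 ≤ a) (h1 : a ≤ 1)
    (S : Finset ι) :
    Measure.pi (fun _ : ι => bernoulliMeasure a) {ω | ∀ i ∈ S, ω i = true} =
      ENNReal.ofReal a ^ #S := by
  have := isProbabilityMeasure_bernoulliMeasure_s16 h0 h1
  have hS : {ω : ι → Bool | ∀ i ∈ S, ω i = true} = (S : Set ι).pi fun _ => {true} := by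
    ext; simp
  rw [hS, Measure.pi_pi_finset, prod_const]
  simp [bernoulliMeasure]

def edgeBetween {n : ℕ} {x y : Fin n} (h : x ≠ y) : {e : Fin n × Fin n // e.1 < e.2} :=
  ⟨(min x y, max x y), min_lt_max.2 h⟩

lemma edgeBetween_eq_edgeBetween_iff {n : ℕ} {x y x' y' : Fin n} (h : x ≠ y) (h' : x' ≠ y') :
    edgeBetween h = edgeBetween h' ↔ x = x' ∧ y = y' ∨ x = y' ∧ y = x' := by
  simp only [edgeBetween, Subtype.mk.injEq, Prod.mk.injEq]
  rcases lt_or_gt_of_ne h with hxy | hxy <;> rcases lt_or_gt_of_ne h' with hxy' | hxy' <;>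
    simp [hxy.le, hxy'.le] <;> omega

lemma apply_edgeBetween_of_erGraph_adj {n : ℕ} {ω : EdgeSpace n} {x y : Fin n}
    (h : (erGraph ω).Adj x y) :
    ω (edgeBetween h.ne) = true := by
  have hadj := h
  rw [erGraph, SimpleGraph.fromRel_adj] at hadj
  obtain ⟨-, ⟨hxy, hω⟩ | ⟨hyx, hω⟩⟩ := hadj
  · simpa [edgeBetween, hxy.le] using hω
  · simpa [edgeBetween, hyx.le] using hω

instance (n : ℕ) (a : ℝ) : IsFiniteMeasure (erMeasure n a) := by
  unfold erMeasure; infer_instance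

def pathEdge {n i : ℕ} {v : Fin (i + 1) → Fin n} (hv : Function.Injective v) (j : Fin i) :
    {e : Fin n × Fin n // e.1 < e.2} :=
  edgeBetween (hv.ne (Fin.castSucc_lt_succ (i := j)).ne)

lemma pathEdge_injective {n i : ℕ} {v : Fin (i + 1) → Fin n} (hv : Function.Injective v) :
    Function.Injective (pathEdge hv) := by
  intro j j' h
  rcases (edgeBetween_eq_edgeBetween_iff _ _).1 h with ⟨h1, -⟩ | ⟨h1, h2⟩
  · exact Fin.castSucc_injective _ (hv h1)
  · have h1 := congrArg Fin.val (hv h1)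
    have h2 := congrArg Fin.val (hv h2)
    simp only [Fin.val_castSucc, Fin.val_succ] at h1 h2
    omega

lemma measureReal_erGraph_isPathSeq_le {n i : ℕ} {a : ℝ} (h0 : 0 ≤ a) (h1 : a ≤ 1)
    (v : Fin (i + 1) → Fin n) :
    (erMeasure n a).real {ω | (erGraph ω).IsPathSeq v} ≤ a ^ i := by
  by_cases hv : Function.Injective v
  · have hsub : {ω | (erGraph ω).IsPathSeq v} ⊆
        {ω | ∀ e ∈ univ.image (pathEdge hv), ω e = true} := by
      rintro ω ⟨-, hadj⟩ e he
      obtain ⟨j, -, rfl⟩ := mem_image.1 he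
      exact apply_edgeBetween_of_erGraph_adj (hadj j)
    calc _ ≤ (erMeasure n a).real {ω | ∀ e ∈ univ.image (pathEdge hv), ω e = true} :=
          measureReal_mono hsub
      _ = a ^ i := by
          rw [measureReal_def, erMeasure, pi_bernoulliMeasure_forall_true h0 h1,
            card_image_of_injective _ (pathEdge_injective hv), card_univ, Fintype.card_fin,
            ENNReal.toReal_pow, ENNReal.toReal_ofReal h0]
  · have hempty : {ω | (erGraph ω).IsPathSeq v} = ∅ :=
      Set.eq_empty_of_forall_notMem fun ω h => hv h.1
    simp [hempty, pow_nonneg h0]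

lemma integral_numPathsFrom_erGraph_le {n : ℕ} {a : ℝ} (h0 : 0 ≤ a) (h1 : a ≤ 1) (s : Fin n)
    (i : ℕ) : ∫ ω, ((erGraph ω).numPathsFrom s i : ℝ) ∂erMeasure n a ≤ n ^ i * a ^ i := by
  have hcard : ∀ ω : EdgeSpace n, ((erGraph ω).numPathsFrom s i : ℝ) =
      ∑ w : Fin i → Fin n,
        {ω | (erGraph ω).IsPathSeq (Fin.cons s w : Fin (i + 1) → Fin n)}.indicator 1 ω := by
    intro ω
    rw [SimpleGraph.numPathsFrom, card_filter]
    push_cast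
    rfl
  simp_rw [hcard]
  rw [integral_finsetSum _ fun _ _ => Integrable.of_finite]
  simp_rw [integral_indicator_one MeasurableSet.of_discrete]
  calc _ ≤ ∑ _w : Fin i → Fin n, a ^ i :=
        sum_le_sum fun w _ => measureReal_erGraph_isPathSeq_le h0 h1 _
    _ = n ^ i * a ^ i := by simp

/-- for G ~ G(n, p/n) with n > p and any fixed vertex s and k ≥ 0,
E |{u : dist_G(s,u) ≤ k}| ≤ 1 + p + ⋯ + p^k. -/
theorem expected_ball_size_le_geometric_sum
    (p : ℝ) (hp : 0 < p) (k : ℕ) :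
    ∀ n : ℕ, p < n → ∀ s : Fin n,
      (∫ ω, ((Set.ncard {u : Fin n |
          (erGraph ω).Reachable s u ∧ (erGraph ω).dist s u ≤ k}) : ℝ)
        ∂(erMeasure n (p / n)))
      ≤ ∑ i ∈ Finset.range (k + 1), p ^ i := by
  intro n hn s
  have hn0 : (0 : ℝ) < n := hp.trans hn
  have h0 : 0 ≤ p / n := div_nonneg hp.le hn0.le
  have h1 : p / n ≤ 1 := (div_le_one hn0).2 hn.le
  calc _ ≤ ∫ ω, ∑ i ∈ range (k + 1), ((erGraph ω).numPathsFrom s i : ℝ) ∂erMeasure n (p / n) :=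
        integral_mono Integrable.of_finite Integrable.of_finite fun ω => by
          beta_reduce
          exact_mod_cast (erGraph ω).ncard_ball_le_sum_numPathsFrom s k
    _ = ∑ i ∈ range (k + 1), ∫ ω, ((erGraph ω).numPathsFrom s i : ℝ) ∂erMeasure n (p / n) :=
        integral_finsetSum _ fun _ _ => Integrable.of_finite
    _ ≤ ∑ i ∈ range (k + 1), (n : ℝ) ^ i * (p / n) ^ i :=
        sum_le_sum fun i _ => integral_numPathsFrom_erGraph_le h0 h1 s i
    _ = ∑ i ∈ range (k + 1), p ^ i := by simp_rw [← mul_pow, mul_div_cancel₀ _ hn0.ne']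
end

section
/- Let c > 0 and let A be the adjacency matrix of any simple graph on n ≥ 2 vertices. Let D be the diagonal matrix with diagonal c·1_n + A·1_n, J the n×n matrix all of whose entries are 1/n, M = D^{-1}(cJ + A), and K = D^{-1}A. Then all eigenvalues of M and of K are real, and when both spectra are listed in increasing order (with multiplicity) as λ_1(K) ≤ … ≤ λ_n(K) and λ_1(M) ≤ … ≤ λ_n(M), one has λ_i(K) ≤ λ_i(M) ≤ λ_{i+1}(K) for every 1 ≤ i ≤ n−1. -/
open Module Submodule InnerProductSpace RCLike Matrix Polynomial WithLp

theorem Submodule.exists_mem_inf_ne_zero_of_finrank_lt {K V : Type*} [DivisionRing K]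
    [AddCommGroup V] [Module K V] [FiniteDimensional K V] (p q : Submodule K V)
    (h : finrank K V < finrank K p + finrank K q) : ∃ x ∈ p ⊓ q, x ≠ 0 := by
  refine exists_mem_ne_zero_of_ne_bot fun hbot => h.not_ge ?_
  rw [← finrank_sup_add_finrank_inf_eq, hbot, finrank_bot, add_zero]
  exact (p ⊔ q).finrank_le

theorem Submodule.finrank_le_finrank_inf_ker_add_one {K V : Type*} [DivisionRing K]
    [AddCommGroup V] [Module K V] [FiniteDimensional K V] (p : Submodule K V) (f : V →ₗ[K] K) :
    finrank K p ≤ finrank K ↥(p ⊓ LinearMap.ker f) + 1 := by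
  have hrange : finrank K (LinearMap.range f) ≤ 1 := (finrank_le _).trans (finrank_self K).le
  have := f.finrank_range_add_finrank_ker
  have := finrank_sup_add_finrank_inf_eq p (LinearMap.ker f)
  have := (p ⊔ LinearMap.ker f).finrank_le
  omega

theorem OrthonormalBasis.finrank_span_image {ι 𝕜 E : Type*} [Fintype ι] [RCLike 𝕜]
    [NormedAddCommGroup E] [InnerProductSpace 𝕜 E] (b : OrthonormalBasis ι 𝕜 E) (s : Finset ι) :
    finrank 𝕜 (span 𝕜 (b '' s)) = s.card := by
  rw [Set.image_eq_range, ← Fintype.card_coe]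
  exact finrank_span_eq_card (b.orthonormal.linearIndependent.comp _ Subtype.val_injective)

theorem OrthonormalBasis.repr_eq_zero_of_mem_span_image {ι 𝕜 E : Type*} [Fintype ι] [RCLike 𝕜]
    [NormedAddCommGroup E] [InnerProductSpace 𝕜 E] (b : OrthonormalBasis ι 𝕜 E) {s : Set ι}
    {x : E} (hx : x ∈ span 𝕜 (b '' s)) {i : ι} (hi : i ∉ s) : b.repr x i = 0 := by
  rw [← b.coe_toBasis, Basis.mem_span_image] at hx
  rw [← b.coe_toBasis_repr_apply]
  by_contra h
  exact hi (hx (Finsupp.mem_support_iff.mpr h))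

namespace LinearMap.IsSymmetric

variable {𝕜 E : Type*} [RCLike 𝕜] [NormedAddCommGroup E] [InnerProductSpace 𝕜 E]
  [FiniteDimensional 𝕜 E] {n : ℕ} (hn : finrank 𝕜 E = n)

section
variable {T : E →ₗ[𝕜] E} (hT : T.IsSymmetric)

theorem re_inner_apply_self_eq_sum (x : E) :
    re ⟪T x, x⟫_𝕜 = ∑ i, hT.eigenvalues hn i * ‖(hT.eigenvectorBasis hn).repr x i‖ ^ 2 := by
  rw [← (hT.eigenvectorBasis hn).repr.inner_map_map, PiLp.inner_apply, map_sum]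
  refine Finset.sum_congr rfl fun i _ => ?_
  rw [hT.eigenvectorBasis_apply_self_apply, ← smul_eq_mul, inner_smul_left, conj_ofReal,
    inner_self_eq_norm_sq_to_K, ← ofReal_pow, re_ofReal_mul, ofReal_re]

theorem eigenvalues_mul_norm_sq_le_of_mem_span {k : Fin n} {x : E}
    (hx : x ∈ span 𝕜 (hT.eigenvectorBasis hn '' Set.Iic k)) :
    hT.eigenvalues hn k * ‖x‖ ^ 2 ≤ re ⟪T x, x⟫_𝕜 := by
  rw [hT.re_inner_apply_self_eq_sum hn, ← (hT.eigenvectorBasis hn).repr.norm_map,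
    EuclideanSpace.norm_sq_eq, Finset.mul_sum]
  refine Finset.sum_le_sum fun i _ => ?_
  by_cases hi : i ∈ Set.Iic k
  · exact mul_le_mul_of_nonneg_right (hT.eigenvalues_antitone hn hi) (sq_nonneg _)
  · simp [(hT.eigenvectorBasis hn).repr_eq_zero_of_mem_span_image hx hi]

theorem re_inner_le_eigenvalues_mul_norm_sq_of_mem_span {k : Fin n} {x : E}
    (hx : x ∈ span 𝕜 (hT.eigenvectorBasis hn '' Set.Ici k)) :
    re ⟪T x, x⟫_𝕜 ≤ hT.eigenvalues hn k * ‖x‖ ^ 2 := by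
  rw [hT.re_inner_apply_self_eq_sum hn, ← (hT.eigenvectorBasis hn).repr.norm_map,
    EuclideanSpace.norm_sq_eq, Finset.mul_sum]
  refine Finset.sum_le_sum fun i _ => ?_
  by_cases hi : i ∈ Set.Ici k
  · exact mul_le_mul_of_nonneg_right (hT.eigenvalues_antitone hn hi) (sq_nonneg _)
  · simp [(hT.eigenvectorBasis hn).repr_eq_zero_of_mem_span_image hx hi]

theorem finrank_span_eigenvectorBasis_Iic (k : Fin n) :
    finrank 𝕜 (span 𝕜 (hT.eigenvectorBasis hn '' Set.Iic k)) = k + 1 := by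
  rw [← Finset.coe_Iic, (hT.eigenvectorBasis hn).finrank_span_image, Fin.card_Iic]

theorem finrank_span_eigenvectorBasis_Ici (k : Fin n) :
    finrank 𝕜 (span 𝕜 (hT.eigenvectorBasis hn '' Set.Ici k)) = n - k := by
  rw [← Finset.coe_Ici, (hT.eigenvectorBasis hn).finrank_span_image, Fin.card_Ici]

theorem le_eigenvalues_of_le_finrank {k : Fin n} (V : Submodule 𝕜 E)
    (hV : k + 1 ≤ finrank 𝕜 V) {a : ℝ} (ha : ∀ x ∈ V, a * ‖x‖ ^ 2 ≤ re ⟪T x, x⟫_𝕜) :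
    a ≤ hT.eigenvalues hn k := by
  obtain ⟨x, ⟨hxV, hxW⟩, hx0⟩ := exists_mem_inf_ne_zero_of_finrank_lt V _ (by
    rw [hn, hT.finrank_span_eigenvectorBasis_Ici hn k]; omega)
  refine le_of_mul_le_mul_right ?_ (by positivity : 0 < ‖x‖ ^ 2)
  exact (ha x hxV).trans (hT.re_inner_le_eigenvalues_mul_norm_sq_of_mem_span hn hxW)

end

variable {S T : E →ₗ[𝕜] E} (hS : S.IsSymmetric) (hT : T.IsSymmetric)

theorem eigenvalues_le_eigenvalues_of_le (hST : S ≤ T) (k : Fin n) :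
    hS.eigenvalues hn k ≤ hT.eigenvalues hn k := by
  refine hT.le_eigenvalues_of_le_finrank hn _ (hS.finrank_span_eigenvectorBasis_Iic hn k).ge
    fun x hx => (hS.eigenvalues_mul_norm_sq_le_of_mem_span hn hx).trans ?_
  simpa [inner_sub_left] using hST.2 x

theorem eigenvalues_le_eigenvalues_of_eq_add_rankOne {v : E}
    (hTS : T = S + (rankOne 𝕜 v v : E →L[𝕜] E)) {j k : Fin n} (hkj : k < j) :
    hT.eigenvalues hn j ≤ hS.eigenvalues hn k := by
  refine hS.le_eigenvalues_of_le_finrank hn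
    (span 𝕜 (hT.eigenvectorBasis hn '' Set.Iic j) ⊓ LinearMap.ker (innerₛₗ 𝕜 v)) ?_
    fun x hx => (hT.eigenvalues_mul_norm_sq_le_of_mem_span hn hx.1).trans_eq ?_
  · have := finrank_le_finrank_inf_ker_add_one
      (span 𝕜 (hT.eigenvectorBasis hn '' Set.Iic j)) (innerₛₗ 𝕜 v)
    rw [hT.finrank_span_eigenvectorBasis_Iic hn j] at this
    omega
  · have hv : ⟪v, x⟫_𝕜 = 0 := hx.2
    simp [hTS, rankOne_apply, hv]

end LinearMap.IsSymmetric

theorem Matrix.charpoly_diagonal_mul_self_mul {n R : Type*} [Fintype n] [DecidableEq n]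
    [CommRing R] (d : n → R) (B : Matrix n n R) :
    (diagonal (d * d) * B).charpoly = (diagonal d * B * diagonal d).charpoly := by
  rw [show diagonal (d * d) = diagonal d * diagonal d from (diagonal_mul_diagonal d d).symm,
    mul_assoc, charpoly_mul_comm, mul_assoc]

theorem Matrix.toEuclideanLin_vecMulVec_self {n : Type*} [Fintype n] [DecidableEq n]
    (w : n → ℝ) :
    toEuclideanLin (vecMulVec w w) = (rankOne ℝ (toLp 2 w) (toLp 2 w) : _ →L[ℝ] _) := by
  rw [eq_comm, ← LinearEquiv.symm_apply_eq, symm_toEuclideanLin_rankOne]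
  simp

theorem Matrix.charpoly_toEuclideanLin {𝕜 n : Type*} [RCLike 𝕜] [Fintype n] [DecidableEq n]
    (A : Matrix n n 𝕜) : (toEuclideanLin A).charpoly = A.charpoly := by
  rw [toEuclideanLin_eq_toLin_orthonormal, charpoly_toLin]

theorem Matrix.charpoly_map_ofReal_eq_prod_eigenvalues_rev {n : ℕ}
    {B S : Matrix (Fin n) (Fin n) ℝ} (hBS : B.charpoly = S.charpoly)
    (hS : (toEuclideanLin S).IsSymmetric) :
    (B.map Complex.ofReal).charpoly =
      ∏ i : Fin n, (X - C (Complex.ofReal (hS.eigenvalues finrank_euclideanSpace_fin i.rev))) := by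
  rw [show B.map Complex.ofReal = B.map Complex.ofRealHom from rfl, charpoly_map, hBS,
    ← charpoly_toEuclideanLin, hS.charpoly_eq finrank_euclideanSpace_fin, Polynomial.map_prod,
    ← Equiv.prod_comp Fin.revPerm]
  simp

theorem Matrix.exists_interlacing_of_charpoly_eq_add_vecMulVec {n : ℕ}
    {K M S : Matrix (Fin n) (Fin n) ℝ} (hS : S.IsHermitian) (w : Fin n → ℝ)
    (hK : K.charpoly = S.charpoly) (hM : M.charpoly = (S + vecMulVec w w).charpoly) :
    ∃ lamK lamM : Fin n → ℝ,
      Monotone lamK ∧ Monotone lamM ∧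
      (K.map Complex.ofReal).charpoly = ∏ i : Fin n, (X - C (Complex.ofReal (lamK i))) ∧
      (M.map Complex.ofReal).charpoly = ∏ i : Fin n, (X - C (Complex.ofReal (lamM i))) ∧
      ∀ (i : ℕ) (hi : i + 1 < n),
        lamK ⟨i, Nat.lt_of_succ_lt hi⟩ ≤ lamM ⟨i, Nat.lt_of_succ_lt hi⟩ ∧
        lamM ⟨i, Nat.lt_of_succ_lt hi⟩ ≤ lamK ⟨i + 1, hi⟩ := by
  have hST : toEuclideanLin (S + vecMulVec w w) =
      toEuclideanLin S + (rankOne ℝ (toLp 2 w) (toLp 2 w) : _ →L[ℝ] _) := by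
    rw [map_add, toEuclideanLin_vecMulVec_self]
  have hS' := isSymmetric_toEuclideanLin_iff.mpr hS
  have hT' : (toEuclideanLin (S + vecMulVec w w)).IsSymmetric :=
    hST ▸ hS'.add (isSymmetric_rankOne_self _)
  have hn := finrank_euclideanSpace_fin (𝕜 := ℝ) (n := n)
  -- `eigenvalues` are sorted decreasingly, hence the `Fin.rev`.
  refine ⟨fun i => hS'.eigenvalues hn i.rev, fun i => hT'.eigenvalues hn i.rev,
    (hS'.eigenvalues_antitone hn).comp Fin.rev_anti,
    (hT'.eigenvalues_antitone hn).comp Fin.rev_anti,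
    charpoly_map_ofReal_eq_prod_eigenvalues_rev hK hS',
    charpoly_map_ofReal_eq_prod_eigenvalues_rev hM hT', fun i hi => ⟨?_, ?_⟩⟩
  · refine hS'.eigenvalues_le_eigenvalues_of_le hn hT' ?_ _
    rw [hST]
    exact le_add_of_nonneg_right ((LinearMap.nonneg_iff_isPositive _).mpr
      (isPositive_rankOne_self _).toLinearMap)
  · refine hS'.eigenvalues_le_eigenvalues_of_eq_add_rankOne hn hT' hST ?_
    rw [Fin.rev_lt_rev]
    exact Fin.mk_lt_mk.mpr i.lt_succ_self

theorem Matrix.charpoly_of_div_eq_charpoly_inv_sqrt {n : Type*} [Fintype n] [DecidableEq n]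
    (B : Matrix n n ℝ) {r : n → ℝ} (hr : ∀ i, 0 ≤ r i) :
    (of fun i j => B i j / r i).charpoly =
      (diagonal (fun i => (√(r i))⁻¹) * B * diagonal (fun i => (√(r i))⁻¹)).charpoly := by
  -- Where `r i = 0` both rows vanish, since `x / 0 = 0 = (√0)⁻¹`.
  rw [← charpoly_diagonal_mul_self_mul]
  congr 1
  ext i j
  simp [diagonal_mul, ← mul_inv, Real.mul_self_sqrt (hr i), div_eq_inv_mul]

open Polynomial in
theorem eigenvalue_interlacing_K_M_general
    (c : ℝ) (hc : 0 < c) (n : ℕ)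
    (A : Matrix (Fin n) (Fin n) ℝ)
    (h01 : ∀ i j, A i j = 0 ∨ A i j = 1)
    (hsym : A.IsSymm) :
    ∃ lamK lamM : Fin n → ℝ,
      Monotone lamK ∧ Monotone lamM ∧
      ((Kmat c A).map Complex.ofReal).charpoly
        = ∏ i : Fin n, (X - C (Complex.ofReal (lamK i))) ∧
      ((Mmat c A).map Complex.ofReal).charpoly
        = ∏ i : Fin n, (X - C (Complex.ofReal (lamM i))) ∧
      ∀ (i : ℕ) (hi : i + 1 < n),
        lamK ⟨i, Nat.lt_of_succ_lt hi⟩ ≤ lamM ⟨i, Nat.lt_of_succ_lt hi⟩ ∧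
        lamM ⟨i, Nat.lt_of_succ_lt hi⟩ ≤ lamK ⟨i + 1, hi⟩ := by
  have hdeg : ∀ i, 0 ≤ c + ∑ l, A i l := fun i =>
    add_nonneg hc.le (Finset.sum_nonneg fun l _ => by rcases h01 i l with h | h <;> simp [h])
  set s : Fin n → ℝ := fun i => (√(c + ∑ l, A i l))⁻¹
  have hS : (diagonal s * A * diagonal s).IsHermitian := by
    simpa using isHermitian_conjTranspose_mul_mul (diagonal s) (isHermitian_iff_isSymm.mpr hsym)
  have hJ : diagonal s * (of fun i j => c / n + A i j) * diagonal s =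
      diagonal s * A * diagonal s + vecMulVec (√(c / n) • s) (√(c / n) • s) := by
    ext i j
    simp only [diagonal_mul, mul_diagonal, Matrix.add_apply, of_apply, vecMulVec_apply,
      Pi.smul_apply, smul_eq_mul]
    rw [mul_mul_mul_comm, Real.mul_self_sqrt (by positivity)]
    ring
  exact exists_interlacing_of_charpoly_eq_add_vecMulVec hS _
    (charpoly_of_div_eq_charpoly_inv_sqrt A hdeg)
    (hJ ▸ charpoly_of_div_eq_charpoly_inv_sqrt (of fun i j => c / n + A i j) hdeg)

open Polynomial in
/-- for the adjacency matrix A of a simple graph on n ≥ 2 vertices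
and c > 0, the matrices K = D⁻¹A and M = D⁻¹(cJ+A) have real eigenvalues, and
the increasingly sorted eigenvalues interlace: λ_i(K) ≤ λ_i(M) ≤ λ_{i+1}(K) for
all 1 ≤ i ≤ n−1. -/
theorem eigenvalue_interlacing_K_M
    (c : ℝ) (hc : 0 < c) (n : ℕ) (hn : 2 ≤ n)
    (A : Matrix (Fin n) (Fin n) ℝ)
    (h01 : ∀ i j, A i j = 0 ∨ A i j = 1)
    (hsym : A.IsSymm) (hdiag : ∀ i, A i i = 0) :
    ∃ lamK lamM : Fin n → ℝ,
      Monotone lamK ∧ Monotone lamM ∧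
      ((Kmat c A).map Complex.ofReal).charpoly
        = ∏ i : Fin n, (X - C (Complex.ofReal (lamK i))) ∧
      ((Mmat c A).map Complex.ofReal).charpoly
        = ∏ i : Fin n, (X - C (Complex.ofReal (lamM i))) ∧
      ∀ (i : ℕ) (hi : i + 1 < n),
        lamK ⟨i, Nat.lt_of_succ_lt hi⟩ ≤ lamM ⟨i, Nat.lt_of_succ_lt hi⟩ ∧
        lamM ⟨i, Nat.lt_of_succ_lt hi⟩ ≤ lamK ⟨i + 1, hi⟩ :=
  eigenvalue_interlacing_K_M_general c hc n A h01 hsym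
end
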